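/- arXiv:1308.4462 — 4 statements merged into one kernel-verified Lean document; each statement's English description precedes it below -/
import Mathlib

section
/- Assume (B2). The limits η^ω(A) = lim_{n→∞} Φ_n^{z^{-n}ω}(σ)(A) and h(ω,x) = lim_{n→∞} Q_n^ω(1)(x)/Φ_n^{z^{-n}ω}(σ)(Q_n^ω(1)) do not depend on the choice of the probability measure σ, and there exist constants C < ∞ and ρ < 1 such that for every n ≥ 1 and every bounded measurable φ : E → ℝ: sup_{ω∈Ω} sup_{σ∈𝒫(E)} | Φ_n^{z^{-n}ω}(σ)(φ) − η^ω(φ) | ≤ C·ρ^n·sup_{x∈E}|φ(x)|, and sup_{ω∈Ω} sup_{x∈E} sup_{σ∈𝒫(E)} | Q_n^ω(1)(x)/Φ_n^{z^{-n}ω}(σ)(Q_n^ω(1)) − h(ω,x) | ≤ C·ρ^n. -/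
/-!
Under (B2) every kernel `M^ω(x, ·)` lies between `εm ν` and `εp ν`. This makes integration
against `M^ω` a Doeblin contraction of ratios: if `s g ≤ f ≤ (s + w) g` pointwise, then
`M^ω f / M^ω g` lies in a subinterval of `[s, s + w]` of width `ρ w`, `ρ = 1 - εm / εp`, and the
weights `W` cancel in such ratios. Iterating, `Q_n^θ G / Q_n^θ 1` is constant up to a relative
error `O(ρ^n)`, uniformly in `θ` and in the starting point.

Since `Φ_m^{z^{-m}ω}(σ) = Φ_n^{z^{-n}ω}(σ Q_{m-n}^{z^{-m}ω})`, all normalised backward iterates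
with `m ≥ n`, for all initial laws `σ`, then lie in one interval of width `O(ρ^n)`. So they are
uniformly Cauchy and converge geometrically to a limit that does not depend on `σ`; setwise this
limit is a measure `η^ω` because every `Φ_n` (`n ≥ 1`) is dominated by `εp ν`. For `h` the same
pinching is applied to the numerator `Q_m^ω(1)(x) ≈ s' Q_n^ω(1)(x)` and to the denominator
`Φ_m(σ)(Q_m^ω(1)) ≈ s' Φ_m(σ)(Q_n^ω(1)) ≈ s' s`, and the comparability constant `Δ2` bounds
the ratio itself.
-/

open MeasureTheory ENNReal Filter Topology

noncomputable section

/-- The environment space `Ω = H^ℤ`. -/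
abbrev Env (H : Type*) := ℤ → H

/-- The shift operator `z`: `(zω)(n) = ω(n+1)`. -/
def shift {H : Type*} (ω : Env H) : Env H := fun n => ω (n + 1)

/-- The inverse shift `z⁻¹`: `(z⁻¹ω)(n) = ω(n-1)`. -/
def shiftInv {H : Type*} (ω : Env H) : Env H := fun n => ω (n - 1)

/-- Iterates `z^{-k}` of the inverse shift. -/
def zitInv {H : Type*} : ℕ → Env H → Env H
  | 0, ω => ω
  | n + 1, ω => shiftInv (zitInv n ω)

variable {H E : Type*} [MeasurableSpace H] [MeasurableSpace E]

/-- Iterates `z^k` of the shift. -/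
def zit {H : Type*} : ℕ → Env H → Env H
  | 0, ω => ω
  | n + 1, ω => shift (zit n ω)

/-- The sub-Markov kernel `Q^ω(x,dx') = W(ω,x) M^ω(x,dx')`. -/
def Qk (M : Env H → E → Measure E) (W : Env H → E → ℝ) (ω : Env H) (x : E) :
    Measure E := ENNReal.ofReal (W ω x) • M ω x

/-- The compositions `Q_n^ω = Q^ω Q^{zω} ⋯ Q^{z^{n-1}ω}` (with `Q_0` the identity). -/
def Qn (M : Env H → E → Measure E) (W : Env H → E → ℝ) :
    ℕ → Env H → E → Measure E
  | 0, _, x => Measure.dirac x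
  | n + 1, ω, x => (Qn M W n ω x).bind (Qk M W (zit n ω))

/-- The total mass `σ Q_n^ω(1)`. -/
def QnMass (M : Env H → E → Measure E) (W : Env H → E → ℝ)
    (n : ℕ) (ω : Env H) (σ : Measure E) : ℝ≥0∞ :=
  (σ.bind (Qn M W n ω)) Set.univ

/-- `Φ_n^ω(σ)(A) = σQ_n^ω(A) / σQ_n^ω(1)`. -/
def PhiSet (M : Env H → E → Measure E) (W : Env H → E → ℝ)
    (n : ℕ) (ω : Env H) (σ : Measure E) (A : Set E) : ℝ≥0∞ :=
  (σ.bind (Qn M W n ω)) A / QnMass M W n ω σ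

/-- `Φ_n^ω(σ)(φ)` for a `ℝ≥0∞`-valued function `φ`. -/
def PhiFun (M : Env H → E → Measure E) (W : Env H → E → ℝ)
    (n : ℕ) (ω : Env H) (σ : Measure E) (φ : E → ℝ≥0∞) : ℝ≥0∞ :=
  (∫⁻ y, φ y ∂(σ.bind (Qn M W n ω))) / QnMass M W n ω σ

/-- The ratio `Q_n^ω(1)(x) / Φ_n^{z^{-n}ω}(σ)(Q_n^ω(1))` whose limit defines `h(ω,x)`. -/
def ratioH (M : Env H → E → Measure E) (W : Env H → E → ℝ) (σ : Measure E)
    (n : ℕ) (ω : Env H) (x : E) : ℝ≥0∞ :=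
  (Qn M W n ω x) Set.univ /
    PhiFun M W n (zitInv n ω) σ (fun y => (Qn M W n ω y) Set.univ)

/-- `Φ_n^ω(σ)` as a probability measure: `σQ_n^ω` normalised by its total mass. -/
def PhiMeas (M : Env H → E → Measure E) (W : Env H → E → ℝ)
    (n : ℕ) (ω : Env H) (σ : Measure E) : Measure E :=
  (QnMass M W n ω σ)⁻¹ • σ.bind (Qn M W n ω)

theorem exists_tendsto_of_abs_sub_le {ι : Type*} (u : ι → ℕ → ℝ) {ε : ℕ → ℝ}
    (hε : Tendsto ε atTop (𝓝 0)) {N : ℕ} (i₀ : ι)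
    (h : ∀ n, N ≤ n → ∀ m, n ≤ m → ∀ i j, |u i m - u j n| ≤ ε n) :
    ∃ l, ∀ i, Tendsto (u i) atTop (𝓝 l) ∧ ∀ n, N ≤ n → |u i n - l| ≤ ε n := by
  have hcauchy : CauchySeq fun k => u i₀ (k + N) := by
    refine cauchySeq_of_le_tendsto_0 (fun K => 2 * ε (K + N)) (fun n m K hn hm => ?_) ?_
    · have h₁ := abs_le.1 (h (K + N) le_add_self (n + N) (by omega) i₀ i₀)
      have h₂ := abs_le.1 (h (K + N) le_add_self (m + N) (by omega) i₀ i₀)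
      rw [Real.dist_eq, abs_le]
      constructor <;> linarith
    · simpa using (hε.comp (tendsto_add_atTop_nat N)).const_mul 2
  obtain ⟨l, hl⟩ := cauchySeq_tendsto_of_complete hcauchy
  have hl₀ : Tendsto (u i₀) atTop (𝓝 l) := (tendsto_add_atTop_iff_nat N).1 hl
  have hrate : ∀ i n, N ≤ n → |u i n - l| ≤ ε n := fun i n hn => by
    rw [abs_sub_comm]
    exact le_of_tendsto (hl₀.sub_const _).abs
      (eventually_atTop.2 ⟨n, fun m hm => h n hn m hm i₀ i⟩)
  refine ⟨l, fun i => ⟨tendsto_iff_dist_tendsto_zero.2 ?_, hrate i⟩⟩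
  exact squeeze_zero' (Eventually.of_forall fun _ => dist_nonneg)
    (eventually_atTop.2 ⟨N, fun n hn => (Real.dist_eq _ _).trans_le (hrate i n hn)⟩) hε

namespace ENNReal

theorem exists_le_eq_mul_of_le_mul {a b w : ℝ≥0∞} (hb : b ≠ ∞) (h : a ≤ w * b) :
    ∃ u ≤ w, a = u * b := by
  rcases eq_or_ne b 0 with rfl | hb₀
  · exact ⟨0, zero_le, by simpa using h⟩
  · exact ⟨a / b, ENNReal.div_le_of_le_mul h, (ENNReal.div_mul_cancel hb₀ hb).symm⟩

theorem abs_toReal_sub_toReal_le_of_mem_Icc {a b s w : ℝ≥0∞} (hsw : s + w ≠ ∞)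
    (ha : s ≤ a ∧ a ≤ s + w) (hb : s ≤ b ∧ b ≤ s + w) : |a.toReal - b.toReal| ≤ w.toReal := by
  have hsw' : (s + w).toReal = s.toReal + w.toReal :=
    toReal_add (add_ne_top.1 hsw).1 (add_ne_top.1 hsw).2
  have ha₁ := toReal_mono (ne_top_of_le_ne_top hsw ha.2) ha.1
  have ha₂ := toReal_mono hsw ha.2
  have hb₁ := toReal_mono (ne_top_of_le_ne_top hsw hb.2) hb.1
  have hb₂ := toReal_mono hsw hb.2
  rw [abs_sub_le_iff]
  constructor <;> linarith

theorem div_sq_le_div_and_div_le_mul {a b c t P D : ℝ≥0∞} (hc : c ≠ 0) (ht₀ : t ≠ 0)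
    (ht : t ≠ ∞) (hD : D ≠ ∞) (ha : a ≠ ∞) (ha₁ : c * b ≤ a) (ha₂ : a ≤ (1 + D) * c * b)
    (hP₁ : c * t ≤ P) (hP₂ : P ≤ (1 + D) ^ 2 * (c * t)) :
    b / t / (1 + D) ^ 2 ≤ a / P ∧ a / P ≤ (1 + D) * (b / t) := by
  have hP : P ≠ 0 := ((ENNReal.mul_pos hc ht₀).trans_le hP₁).ne'
  have hD2 : (1 + D) ^ 2 ≠ ∞ := pow_ne_top (add_ne_top.2 ⟨one_ne_top, hD⟩)
  have hbt : b / t * t = b := ENNReal.div_mul_cancel ht₀ ht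
  constructor
  · rw [ENNReal.le_div_iff_mul_le (Or.inl hP) (Or.inr ha)]
    calc b / t / (1 + D) ^ 2 * P ≤ b / t / (1 + D) ^ 2 * ((1 + D) ^ 2 * (c * t)) := by gcongr
      _ = c * b := by
        rw [← mul_assoc, ENNReal.div_mul_cancel (pow_ne_zero 2 (by simp)) hD2, mul_comm c,
          ← mul_assoc, hbt, mul_comm]
      _ ≤ a := ha₁
  · refine ENNReal.div_le_of_le_mul ?_
    calc a ≤ (1 + D) * c * b := ha₂
      _ = (1 + D) * (b / t) * (c * t) := by
        rw [mul_comm c t, ← mul_assoc, mul_assoc _ _ t, hbt]; ring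
      _ ≤ (1 + D) * (b / t) * P := by gcongr

theorem abs_toReal_sub_le_of_div_sq_le_of_le_mul {a V D : ℝ≥0∞} (hV : V ≠ ∞) (hD : D ≠ ∞)
    (hlow : V / (1 + D) ^ 2 ≤ a) (hup : a ≤ (1 + D) * V) :
    |a.toReal - V.toReal| ≤ 2 * D.toReal * V.toReal := by
  have h1D : 1 + D ≠ ∞ := add_ne_top.2 ⟨one_ne_top, hD⟩
  have hup' := toReal_mono (mul_ne_top h1D hV) hup
  have hlow' := toReal_mono (ne_top_of_le_ne_top (mul_ne_top h1D hV) hup) hlow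
  rw [toReal_mul, toReal_add one_ne_top hD, toReal_one] at hup'
  rw [toReal_div, toReal_pow, toReal_add one_ne_top hD, toReal_one] at hlow'
  have hd : 0 ≤ D.toReal := toReal_nonneg
  have hv : 0 ≤ V.toReal := toReal_nonneg
  have hlow'' : V.toReal - 2 * D.toReal * V.toReal ≤ V.toReal / (1 + D.toReal) ^ 2 := by
    rw [le_div_iff₀ (by positivity)]
    nlinarith [mul_nonneg hv (mul_nonneg hd hd), mul_nonneg hv (mul_nonneg hd (mul_nonneg hd hd))]
  rw [abs_sub_le_iff]
  constructor <;> nlinarith [mul_nonneg hd hv]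

end ENNReal

namespace MeasureTheory

variable {α : Type*} [MeasurableSpace α]

theorem mul_lintegral_le_lintegral_of_smul_le {μ ν : Measure α} {c : ℝ≥0∞} (h : c • ν ≤ μ)
    (f : α → ℝ≥0∞) : c * ∫⁻ x, f x ∂ν ≤ ∫⁻ x, f x ∂μ := by
  rw [← smul_eq_mul, ← lintegral_smul_measure]
  exact lintegral_mono' h le_rfl

theorem lintegral_le_mul_lintegral_of_le_smul {μ ν : Measure α} {c : ℝ≥0∞} (h : μ ≤ c • ν)
    (f : α → ℝ≥0∞) : ∫⁻ x, f x ∂μ ≤ c * ∫⁻ x, f x ∂ν := by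
  rw [← smul_eq_mul, ← lintegral_smul_measure]
  exact lintegral_mono' h le_rfl

theorem Measure.smul_le_and_le_smul {μ ν : Measure α} {a b : ℝ≥0∞}
    (h : ∀ A, MeasurableSet A → a * ν A ≤ μ A ∧ μ A ≤ b * ν A) : a • ν ≤ μ ∧ μ ≤ b • ν :=
  ⟨Measure.le_iff.2 fun A hA => by simpa using (h A hA).1,
    Measure.le_iff.2 fun A hA => by simpa using (h A hA).2⟩

theorem Measure.exists_eq_of_tendsto_of_le_smul {μ : ℕ → Measure α} {ν : Measure α}
    [IsFiniteMeasure ν] {c : ℝ≥0∞} (hc : c ≠ ∞) (hle : ∀ n, μ n ≤ c • ν) {m : Set α → ℝ≥0∞}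
    (hm : ∀ A, MeasurableSet A → Tendsto (fun n => μ n A) atTop (𝓝 (m A))) :
    ∃ η : Measure α, ∀ A, MeasurableSet A → η A = m A := by
  have hempty : m ∅ = 0 := tendsto_nhds_unique (hm ∅ MeasurableSet.empty) (by simp)
  have hunion : ∀ ⦃f : ℕ → Set α⦄ (hf : ∀ i, MeasurableSet (f i)),
      Pairwise (Function.onFun Disjoint f) → m (⋃ i, f i) = ∑' i, m (f i) := by
    intro f hf hdisj
    refine tendsto_nhds_unique (hm _ (MeasurableSet.iUnion hf)) ?_
    simp_rw [measure_iUnion hdisj hf, ← lintegral_count]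
    -- dominated convergence for series, with the summable bound `c * ν (f i)`
    refine tendsto_lintegral_of_dominated_convergence (fun i => c * ν (f i))
      (fun _ => measurable_of_countable _) (fun n => ae_of_all _ fun i => ?_) ?_
      (ae_of_all _ fun i => hm _ (hf i))
    · simpa using Measure.le_iff.1 (hle n) _ (hf i)
    · rw [lintegral_count, ENNReal.tsum_mul_left, ← measure_iUnion hdisj hf]
      exact ENNReal.mul_ne_top hc (measure_ne_top _ _)
  exact ⟨Measure.ofMeasurable (fun A _ => m A) hempty hunion,
    fun A hA => Measure.ofMeasurable_apply A hA⟩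

theorem abs_integral_sub_integral_le_of_abs_measureReal_sub_le {μ η : Measure α}
    [IsProbabilityMeasure μ] [IsProbabilityMeasure η] {δ : ℝ}
    (hδ : ∀ A, MeasurableSet A → |μ.real A - η.real A| ≤ δ) {φ : α → ℝ} (hφ : Measurable φ)
    {B : ℝ} (hB : ∀ x, |φ x| ≤ B) :
    |∫ x, φ x ∂μ - ∫ x, φ x ∂η| ≤ 2 * B * δ := by
  have hB0 : 0 ≤ B :=
    (nonempty_of_isProbabilityMeasure μ).elim fun x => (abs_nonneg _).trans (hB x)
  -- shift `φ` to a function with values in `[0, 2B]` and use the layer-cake formula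
  set f : α → ℝ := fun x => φ x + B
  have hf0 : ∀ x, 0 ≤ f x := fun x => by linarith [(abs_le.1 (hB x)).1]
  have hf2B : ∀ x, f x ≤ 2 * B := fun x => by linarith [(abs_le.1 (hB x)).2]
  have hlayer : ∀ (κ : Measure α) [IsProbabilityMeasure κ],
      ∫ x, φ x ∂κ + B = ∫ t in Set.Ioc 0 (2 * B), κ.real {x | t ≤ f x} := by
    intro κ _
    have hint : Integrable φ κ := .of_bound hφ.aestronglyMeasurable B
      (ae_of_all _ fun x => (Real.norm_eq_abs _).trans_le (hB x))
    have hintf : Integrable f κ := hint.add (integrable_const B)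
    rw [← hintf.integral_eq_integral_Ioc_meas_le (ae_of_all _ hf0) (ae_of_all _ hf2B),
      integral_add hint (integrable_const B)]
    simp
  have hint : ∀ (κ : Measure α) [IsProbabilityMeasure κ],
      IntegrableOn (fun t => κ.real {x | t ≤ f x}) (Set.Ioc 0 (2 * B)) := by
    intro κ _
    refine Measure.integrableOn_of_bounded (M := 1) measure_Ioc_lt_top.ne ?_
      (ae_of_all _ fun t => ?_)
    · exact (Antitone.measurable (f := fun t : ℝ => κ.real {x | t ≤ f x})
        fun _ _ hst => measureReal_mono fun _ h => hst.trans h).aestronglyMeasurable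
    · rw [Real.norm_eq_abs, abs_of_nonneg measureReal_nonneg]
      exact measureReal_le_one
  have hdiff : ∫ x, φ x ∂μ - ∫ x, φ x ∂η
      = ∫ t in Set.Ioc 0 (2 * B), (μ.real {x | t ≤ f x} - η.real {x | t ≤ f x}) := by
    rw [integral_sub (hint μ) (hint η), ← hlayer μ, ← hlayer η]
    ring
  rw [hdiff, ← Real.norm_eq_abs]
  refine (norm_setIntegral_le_of_norm_le_const (C := δ) measure_Ioc_lt_top
    fun t _ => ?_).trans_eq ?_
  · exact hδ _ (measurableSet_le measurable_const (hφ.add measurable_const))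
  · rw [measureReal_def, Real.volume_Ioc, ENNReal.toReal_ofReal (by linarith)]
    ring

theorem mul_lintegral_le_of_lintegral_eq_mul {β : Type*} {κ : β → Measure α} {ν : Measure α}
    {εm εp : ℝ} (hεm : 0 < εm) (hεmp : εm ≤ εp)
    (hκ : ∀ x, ENNReal.ofReal εm • ν ≤ κ x ∧ κ x ≤ ENNReal.ofReal εp • ν)
    {g h : α → ℝ≥0∞} {t : ℝ≥0∞} (ht : ∫⁻ y, h y ∂ν = t * ∫⁻ y, g y ∂ν) (x : β) :
    ENNReal.ofReal (εm / εp) * t * ∫⁻ y, g y ∂κ x ≤ ∫⁻ y, h y ∂κ x := by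
  have hεp : 0 < εp := hεm.trans_le hεmp
  have hδεp : ENNReal.ofReal (εm / εp) * ENNReal.ofReal εp = ENNReal.ofReal εm := by
    rw [← ENNReal.ofReal_mul (div_nonneg hεm.le hεp.le), div_mul_cancel₀ _ hεp.ne']
  calc ENNReal.ofReal (εm / εp) * t * ∫⁻ y, g y ∂κ x
      ≤ ENNReal.ofReal (εm / εp) * t * (ENNReal.ofReal εp * ∫⁻ y, g y ∂ν) := by
        gcongr; exact lintegral_le_mul_lintegral_of_le_smul (hκ x).2 g
    _ = ENNReal.ofReal εm * ∫⁻ y, h y ∂ν := by rw [ht, ← hδεp]; ring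
    _ ≤ ∫⁻ y, h y ∂κ x := mul_lintegral_le_lintegral_of_smul_le (hκ x).1 h

end MeasureTheory

def Pinched {α : Type*} (s w : ℝ≥0∞) (f g : α → ℝ≥0∞) : Prop :=
  ∀ x, s * g x ≤ f x ∧ f x ≤ (s + w) * g x

namespace Pinched

variable {α β : Type*} {s w : ℝ≥0∞} {f g : α → ℝ≥0∞}

theorem mono_width {w' : ℝ≥0∞} (h : Pinched s w f g) (hw : w ≤ w') : Pinched s w' f g :=
  fun x => ⟨(h x).1, (h x).2.trans (by gcongr)⟩

theorem const_mul (h : Pinched s w f g) (c : α → ℝ≥0∞) :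
    Pinched s w (fun x => c x * f x) (fun x => c x * g x) := fun x => by
  constructor
  · calc s * (c x * g x) = c x * (s * g x) := by ring
      _ ≤ c x * f x := by gcongr; exact (h x).1
  · calc c x * f x ≤ c x * ((s + w) * g x) := by gcongr; exact (h x).2
      _ = (s + w) * (c x * g x) := by ring

theorem lintegral [MeasurableSpace α] (h : Pinched s w f g) (hg : Measurable g)
    (μ : Measure α) :
    s * ∫⁻ x, g x ∂μ ≤ ∫⁻ x, f x ∂μ ∧ ∫⁻ x, f x ∂μ ≤ (s + w) * ∫⁻ x, g x ∂μ := by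
  rw [← lintegral_const_mul _ hg, ← lintegral_const_mul _ hg]
  exact ⟨lintegral_mono fun x => (h x).1, lintegral_mono fun x => (h x).2⟩

variable [MeasurableSpace β] {κ : α → Measure β} {ν : Measure β} {εm εp : ℝ}

theorem contract_lintegral (hεm : 0 < εm) (hεmp : εm ≤ εp)
    (hκ : ∀ x, ENNReal.ofReal εm • ν ≤ κ x ∧ κ x ≤ ENNReal.ofReal εp • ν)
    {s w : ℝ≥0∞} {f g : β → ℝ≥0∞} (hf : Measurable f) (hg : Measurable g) (hw : w ≠ ∞)
    (hνg : ∫⁻ y, g y ∂ν ≠ ∞) (h : Pinched s w f g) :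
    ∃ s', s ≤ s' ∧ s' + ENNReal.ofReal (1 - εm / εp) * w ≤ s + w ∧
      Pinched s' (ENNReal.ofReal (1 - εm / εp) * w)
        (fun x => ∫⁻ y, f y ∂κ x) (fun x => ∫⁻ y, g y ∂κ x) := by
  have hεp : 0 < εp := hεm.trans_le hεmp
  set δ := ENNReal.ofReal (εm / εp)
  set ρ := ENNReal.ofReal (1 - εm / εp)
  have hδρ : δ + ρ = 1 := by
    rw [← ENNReal.ofReal_add (by positivity) (by linarith [(div_le_one hεp).2 hεmp])]
    norm_num
  have hlift : ∀ x (h : β → ℝ≥0∞) (t : ℝ≥0∞), ∫⁻ y, h y ∂ν = t * ∫⁻ y, g y ∂ν →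
      δ * t * ∫⁻ y, g y ∂κ x ≤ ∫⁻ y, h y ∂κ x := fun x _ _ ht =>
    mul_lintegral_le_of_lintegral_eq_mul hεm hεmp hκ ht x
  -- Write `f = s g + ξ` with `0 ≤ ξ ≤ w g` and `ν ξ = u ν g`. Minorisation lifts the lower end
  -- of the pinching by `δ u`; applied to `ζ = w g - ξ` it lowers the upper end by `δ (w - u)`.
  set ξ : β → ℝ≥0∞ := fun y => f y - s * g y
  set ζ : β → ℝ≥0∞ := fun y => w * g y - ξ y
  have hξ : Measurable ξ := hf.sub (hg.const_mul s)
  have hζ : Measurable ζ := (hg.const_mul w).sub hξ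
  have hfξ : ∀ y, f y = s * g y + ξ y := fun y => (add_tsub_cancel_of_le (h y).1).symm
  have hξζ : ∀ y, ξ y + ζ y = w * g y := fun y =>
    add_tsub_cancel_of_le (tsub_le_iff_left.2 (by rw [← add_mul]; exact (h y).2))
  have hνξζ : ∫⁻ y, ξ y ∂ν + ∫⁻ y, ζ y ∂ν = w * ∫⁻ y, g y ∂ν := by
    rw [← lintegral_add_left hξ, ← lintegral_const_mul _ hg]
    exact lintegral_congr hξζ
  obtain ⟨u, huw, hνξ⟩ := ENNReal.exists_le_eq_mul_of_le_mul hνg (hνξζ ▸ le_self_add)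
  have hνζ : ∫⁻ y, ζ y ∂ν = (w - u) * ∫⁻ y, g y ∂ν := by
    rw [ENNReal.sub_mul fun _ _ => hνg, ← hνξζ, hνξ, ENNReal.add_sub_cancel_left]
    exact ENNReal.mul_ne_top (ne_top_of_le_ne_top hw huw) hνg
  refine ⟨s + δ * u, le_self_add, ?_, fun x => ?_⟩
  · calc s + δ * u + ρ * w ≤ s + (δ * w + ρ * w) := by rw [add_assoc]; gcongr
      _ = s + w := by rw [← add_mul, hδρ, one_mul]
  have hκf : ∫⁻ y, f y ∂κ x = s * ∫⁻ y, g y ∂κ x + ∫⁻ y, ξ y ∂κ x := by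
    rw [← lintegral_const_mul _ hg, ← lintegral_add_left (hg.const_mul s)]
    exact lintegral_congr hfξ
  have hκξζ : ∫⁻ y, ξ y ∂κ x + ∫⁻ y, ζ y ∂κ x = w * ∫⁻ y, g y ∂κ x := by
    rw [← lintegral_add_left hξ, ← lintegral_const_mul _ hg]
    exact lintegral_congr hξζ
  have hκg : ∫⁻ y, g y ∂κ x ≠ ∞ := ne_top_of_le_ne_top
    (ENNReal.mul_ne_top ENNReal.ofReal_ne_top hνg)
    (lintegral_le_mul_lintegral_of_le_smul (hκ x).2 g)
  have hup : ∫⁻ y, ξ y ∂κ x ≤ (δ * u + ρ * w) * ∫⁻ y, g y ∂κ x := by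
    have hfin : δ * (w - u) * ∫⁻ y, g y ∂κ x ≠ ∞ := ENNReal.mul_ne_top (ENNReal.mul_ne_top
      ENNReal.ofReal_ne_top (ne_top_of_le_ne_top hw tsub_le_self)) hκg
    refine (ENNReal.add_le_add_iff_right hfin).1 ?_
    calc ∫⁻ y, ξ y ∂κ x + δ * (w - u) * ∫⁻ y, g y ∂κ x
        ≤ ∫⁻ y, ξ y ∂κ x + ∫⁻ y, ζ y ∂κ x := by gcongr; exact hlift x ζ (w - u) hνζ
      _ = w * ∫⁻ y, g y ∂κ x := hκξζ
      _ = (δ * u + ρ * w) * ∫⁻ y, g y ∂κ x + δ * (w - u) * ∫⁻ y, g y ∂κ x := by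
        rw [← add_mul, add_right_comm, ← mul_add, add_tsub_cancel_of_le huw, ← add_mul, hδρ,
          one_mul]
  dsimp only
  rw [hκf]
  constructor
  · rw [add_mul]
    gcongr
    exact hlift x ξ u hνξ
  · calc s * ∫⁻ y, g y ∂κ x + ∫⁻ y, ξ y ∂κ x
        ≤ s * ∫⁻ y, g y ∂κ x + (δ * u + ρ * w) * ∫⁻ y, g y ∂κ x := by gcongr
      _ = (s + δ * u + ρ * w) * ∫⁻ y, g y ∂κ x := by ring

end Pinched

section Shift

omit [MeasurableSpace H]

theorem shift_shiftInv (ω : Env H) : shift (shiftInv ω) = ω := by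
  funext n; simp [shift, shiftInv]

theorem zit_zit (a b : ℕ) (θ : Env H) : zit b (zit a θ) = zit (a + b) θ := by
  induction b with
  | zero => rfl
  | succ b ih => exact congrArg shift ih

theorem zit_shift (a : ℕ) (θ : Env H) : zit a (shift θ) = zit (a + 1) θ := by
  rw [Nat.add_comm, ← zit_zit 1 a]
  rfl

theorem zit_zitInv (a b : ℕ) (ω : Env H) : zit a (zitInv (a + b) ω) = zitInv b ω := by
  induction a generalizing b with
  | zero => rw [Nat.zero_add]; rfl
  | succ a ih =>
    rw [show a + 1 + b = a + (b + 1) by omega, ← zit_zit a 1, ih]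
    exact shift_shiftInv _

end Shift

/-- `Q_n^ω(φ)(x)`. -/
def QnFun (M : Env H → E → Measure E) (W : Env H → E → ℝ)
    (n : ℕ) (ω : Env H) (φ : E → ℝ≥0∞) (x : E) : ℝ≥0∞ :=
  ∫⁻ y, φ y ∂(Qn M W n ω x)

section Semigroup

variable {M : Env H → E → Measure E} {W : Env H → E → ℝ}

omit [MeasurableSpace H] in
theorem QnFun_zero (θ : Env H) {φ : E → ℝ≥0∞} (hφ : Measurable φ) : QnFun M W 0 θ φ = φ :=
  funext fun x => lintegral_dirac' x hφ

omit [MeasurableSpace H] in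
theorem PhiSet_eq_PhiFun (n : ℕ) (θ : Env H) (σ : Measure E) {A : Set E} (hA : MeasurableSet A) :
    PhiSet M W n θ σ A = PhiFun M W n θ σ (A.indicator 1) := by
  rw [PhiSet, PhiFun, lintegral_indicator_one hA]

variable
  (hMmeas : Measurable fun p : Env H × E => M p.1 p.2)
  (hWmeas : Measurable fun p : Env H × E => W p.1 p.2)
include hMmeas hWmeas

theorem measurable_Qk (θ : Env H) : Measurable (Qk M W θ) := by
  refine Measure.measurable_of_measurable_coe _ fun A hA => ?_
  simp only [Qk, Measure.smul_apply, smul_eq_mul]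
  exact (ENNReal.measurable_ofReal.comp (hWmeas.comp measurable_prodMk_left)).mul
    ((Measure.measurable_coe hA).comp (hMmeas.comp measurable_prodMk_left))

theorem measurable_Qn (n : ℕ) (θ : Env H) : Measurable (Qn M W n θ) := by
  induction n with
  | zero => exact Measure.measurable_dirac
  | succ n ih => exact (Measure.measurable_bind' (measurable_Qk hMmeas hWmeas _)).comp ih

theorem measurable_QnFun (n : ℕ) (θ : Env H) {φ : E → ℝ≥0∞} (hφ : Measurable φ) :
    Measurable (QnFun M W n θ φ) :=
  (Measure.measurable_lintegral hφ).comp (measurable_Qn hMmeas hWmeas n θ)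

theorem Qn_add (a b : ℕ) (θ : Env H) (x : E) :
    Qn M W (a + b) θ x = (Qn M W a θ x).bind (Qn M W b (zit a θ)) := by
  induction b with
  | zero => exact Measure.bind_dirac.symm
  | succ b ih =>
    change (Qn M W (a + b) θ x).bind (Qk M W (zit (a + b) θ)) = _
    rw [ih, Measure.bind_bind (measurable_Qn hMmeas hWmeas b _).aemeasurable
      (measurable_Qk hMmeas hWmeas _).aemeasurable, ← zit_zit]
    rfl

theorem bind_Qn_add (a b : ℕ) (θ : Env H) (σ : Measure E) :
    σ.bind (Qn M W (a + b) θ) = (σ.bind (Qn M W a θ)).bind (Qn M W b (zit a θ)) := by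
  rw [Measure.bind_bind (measurable_Qn hMmeas hWmeas a θ).aemeasurable
    (measurable_Qn hMmeas hWmeas b _).aemeasurable]
  exact congrArg _ (funext (Qn_add hMmeas hWmeas a b θ))

theorem QnFun_add (a b : ℕ) (θ : Env H) {φ : E → ℝ≥0∞} (hφ : Measurable φ) :
    QnFun M W (a + b) θ φ = QnFun M W a θ (QnFun M W b (zit a θ) φ) := by
  funext x
  rw [QnFun, Qn_add hMmeas hWmeas,
    Measure.lintegral_bind (measurable_Qn hMmeas hWmeas b _).aemeasurable hφ.aemeasurable]
  rfl

theorem QnFun_one (θ : Env H) (φ : E → ℝ≥0∞) (x : E) :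
    QnFun M W 1 θ φ x = ENNReal.ofReal (W θ x) * ∫⁻ y, φ y ∂(M θ x) := by
  rw [QnFun, Qn, Qn, Measure.dirac_bind (measurable_Qk hMmeas hWmeas _), Qk,
    lintegral_smul_measure, smul_eq_mul]
  rfl

theorem QnFun_succ (k : ℕ) (θ : Env H) {φ : E → ℝ≥0∞} (hφ : Measurable φ) (x : E) :
    QnFun M W (k + 1) θ φ x
      = ENNReal.ofReal (W θ x) * ∫⁻ y, QnFun M W k (shift θ) φ y ∂(M θ x) := by
  rw [Nat.add_comm, QnFun_add hMmeas hWmeas 1 k θ hφ, QnFun_one hMmeas hWmeas]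
  rfl

theorem lintegral_bind_Qn (n : ℕ) (θ : Env H) (σ : Measure E) {φ : E → ℝ≥0∞}
    (hφ : Measurable φ) :
    ∫⁻ y, φ y ∂(σ.bind (Qn M W n θ)) = ∫⁻ x, QnFun M W n θ φ x ∂σ :=
  Measure.lintegral_bind (measurable_Qn hMmeas hWmeas n θ).aemeasurable hφ.aemeasurable

theorem QnMass_eq_lintegral (n : ℕ) (θ : Env H) (σ : Measure E) :
    QnMass M W n θ σ = ∫⁻ x, QnFun M W n θ 1 x ∂σ := by
  rw [QnMass, ← lintegral_one, lintegral_bind_Qn hMmeas hWmeas n θ σ measurable_const]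
  rfl

theorem QnMass_dirac (n : ℕ) (θ : Env H) (x : E) :
    QnMass M W n θ (Measure.dirac x) = QnFun M W n θ 1 x := by
  rw [QnMass_eq_lintegral hMmeas hWmeas,
    lintegral_dirac' x (measurable_QnFun hMmeas hWmeas n θ measurable_one)]

theorem QnMass_add (a b : ℕ) (θ : Env H) (σ : Measure E) :
    QnMass M W (a + b) θ σ = QnMass M W b (zit a θ) (σ.bind (Qn M W a θ)) := by
  rw [QnMass, QnMass, bind_Qn_add hMmeas hWmeas]

theorem PhiFun_add (a b : ℕ) (θ : Env H) (σ : Measure E) (φ : E → ℝ≥0∞) :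
    PhiFun M W (a + b) θ σ φ = PhiFun M W b (zit a θ) (σ.bind (Qn M W a θ)) φ := by
  rw [PhiFun, PhiFun, QnMass_add hMmeas hWmeas, bind_Qn_add hMmeas hWmeas]

end Semigroup

theorem Pinched.contract_QnFun {M : Env H → E → Measure E} {W : Env H → E → ℝ} {ν : Measure E}
    {εm εp : ℝ} (hMmeas : Measurable fun p : Env H × E => M p.1 p.2)
    (hWmeas : Measurable fun p : Env H × E => W p.1 p.2) (hεm : 0 < εm) (hεmp : εm ≤ εp)
    (hM : ∀ ω x, ENNReal.ofReal εm • ν ≤ M ω x ∧ M ω x ≤ ENNReal.ofReal εp • ν)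
    {s w : ℝ≥0∞} {f g : E → ℝ≥0∞} (hf : Measurable f) (hg : Measurable g) (hw : w ≠ ∞)
    (h : Pinched s w f g) (k : ℕ) (θ : Env H)
    (hfin : ∀ j < k, ∫⁻ y, QnFun M W j (zit (k - j) θ) g y ∂ν ≠ ∞) :
    ∃ s', s ≤ s' ∧ s' + ENNReal.ofReal (1 - εm / εp) ^ k * w ≤ s + w ∧
      Pinched s' (ENNReal.ofReal (1 - εm / εp) ^ k * w) (QnFun M W k θ f) (QnFun M W k θ g) := by
  induction k generalizing θ with
  | zero => exact ⟨s, le_rfl, by simp, by simpa [QnFun_zero θ hf, QnFun_zero θ hg] using h⟩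
  | succ k ih =>
    obtain ⟨s₁, hss₁, hs₁, h₁⟩ := ih (shift θ) fun j hj => by
      rw [zit_shift, ← show k + 1 - j = k - j + 1 by omega]
      exact hfin j (by omega)
    have hνg : ∫⁻ y, QnFun M W k (shift θ) g y ∂ν ≠ ∞ := by
      have h := hfin k k.lt_succ_self
      rwa [Nat.add_sub_cancel_left] at h
    obtain ⟨s₂, hs₁s₂, hs₂, h₂⟩ := h₁.contract_lintegral hεm hεmp (hM θ)
      (measurable_QnFun hMmeas hWmeas k _ hf) (measurable_QnFun hMmeas hWmeas k _ hg)
      (ENNReal.mul_ne_top (ENNReal.pow_ne_top ENNReal.ofReal_ne_top) hw) hνg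
    rw [pow_succ', mul_assoc]
    refine ⟨s₂, hss₁.trans hs₁s₂, hs₂.trans hs₁, ?_⟩
    simpa only [← QnFun_succ hMmeas hWmeas k θ hf, ← QnFun_succ hMmeas hWmeas k θ hg] using
      h₂.const_mul fun x => ENNReal.ofReal (W θ x)

section Normalised

variable {M : Env H → E → Measure E} {W : Env H → E → ℝ}

omit [MeasurableSpace H] in
theorem PhiMeas_apply (n : ℕ) (θ : Env H) (σ : Measure E) (A : Set E) :
    PhiMeas M W n θ σ A = PhiSet M W n θ σ A := by
  rw [PhiMeas, PhiSet, Measure.smul_apply, smul_eq_mul, ENNReal.div_eq_inv_mul]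

omit [MeasurableSpace H] in
theorem PhiSet_le_one (n : ℕ) (θ : Env H) (σ : Measure E) (A : Set E) :
    PhiSet M W n θ σ A ≤ 1 :=
  ENNReal.div_le_of_le_mul (by rw [one_mul]; exact measure_mono (Set.subset_univ A))

omit [MeasurableSpace H] in
theorem ratioH_eq (σ : Measure E) (n : ℕ) (ω : Env H) (x : E) :
    ratioH M W σ n ω x = QnFun M W n ω 1 x / PhiFun M W n (zitInv n ω) σ (QnFun M W n ω 1) := by
  have h : QnFun M W n ω 1 = fun y => Qn M W n ω y Set.univ := funext fun y => by simp [QnFun]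
  rw [h]
  rfl

omit [MeasurableSpace H] in
theorem Pinched.PhiFun_mul_le {s w : ℝ≥0∞} {f g : E → ℝ≥0∞} (hg : Measurable g)
    (h : Pinched s w f g) (n : ℕ) (θ : Env H) (τ : Measure E) :
    s * PhiFun M W n θ τ g ≤ PhiFun M W n θ τ f ∧
      PhiFun M W n θ τ f ≤ (s + w) * PhiFun M W n θ τ g := by
  have hτ := h.lintegral hg (τ.bind (Qn M W n θ))
  simp only [PhiFun, ← mul_div_assoc]
  exact ⟨ENNReal.div_le_div_right hτ.1 _, ENNReal.div_le_div_right hτ.2 _⟩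

omit [MeasurableSpace H] in
theorem QnMass_ne_zero_ne_top
    (hmass : ∀ n : ℕ, 1 ≤ n → ∀ ω, ∀ σ : Measure E, IsProbabilityMeasure σ →
      0 < QnMass M W n ω σ ∧ QnMass M W n ω σ < ∞)
    (n : ℕ) (θ : Env H) (σ : Measure E) [hσ : IsProbabilityMeasure σ] :
    QnMass M W n θ σ ≠ 0 ∧ QnMass M W n θ σ ≠ ∞ := by
  rcases n.eq_zero_or_pos with rfl | hn
  · simp [QnMass, Qn, Measure.bind_dirac]
  · exact ⟨(hmass n hn θ σ hσ).1.ne', (hmass n hn θ σ hσ).2.ne⟩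

omit [MeasurableSpace H] in
theorem isProbabilityMeasure_PhiMeas
    (hmass : ∀ n : ℕ, 1 ≤ n → ∀ ω, ∀ σ : Measure E, IsProbabilityMeasure σ →
      0 < QnMass M W n ω σ ∧ QnMass M W n ω σ < ∞)
    (n : ℕ) (θ : Env H) (σ : Measure E) [IsProbabilityMeasure σ] :
    IsProbabilityMeasure (PhiMeas M W n θ σ) := by
  have hσ := QnMass_ne_zero_ne_top hmass n θ σ
  exact ⟨by rw [PhiMeas_apply]; exact ENNReal.div_self hσ.1 hσ.2⟩

variable (hMmeas : Measurable fun p : Env H × E => M p.1 p.2)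
  (hWmeas : Measurable fun p : Env H × E => W p.1 p.2)
include hMmeas hWmeas

theorem Pinched.PhiFun_mem {s w : ℝ≥0∞} {n : ℕ} {θ : Env H} {f : E → ℝ≥0∞}
    (hf : Measurable f) (h : Pinched s w (QnFun M W n θ f) (QnFun M W n θ 1)) {τ : Measure E}
    (h₀ : QnMass M W n θ τ ≠ 0) (htop : QnMass M W n θ τ ≠ ∞) :
    s ≤ PhiFun M W n θ τ f ∧ PhiFun M W n θ τ f ≤ s + w := by
  have hτ := h.lintegral (measurable_QnFun hMmeas hWmeas n θ measurable_one) τ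
  rw [← QnMass_eq_lintegral hMmeas hWmeas, ← lintegral_bind_Qn hMmeas hWmeas n θ τ hf] at hτ
  exact ⟨(ENNReal.le_div_iff_mul_le (Or.inl h₀) (Or.inl htop)).2 hτ.1,
    ENNReal.div_le_of_le_mul hτ.2⟩

variable (hmass : ∀ n : ℕ, 1 ≤ n → ∀ ω, ∀ σ : Measure E, IsProbabilityMeasure σ →
  0 < QnMass M W n ω σ ∧ QnMass M W n ω σ < ∞)
include hmass

theorem lintegral_QnFun_one_ne_zero_ne_top {ν : Measure E} [IsProbabilityMeasure ν] (n : ℕ)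
    (θ : Env H) : ∫⁻ y, QnFun M W n θ 1 y ∂ν ≠ 0 ∧ ∫⁻ y, QnFun M W n θ 1 y ∂ν ≠ ∞ := by
  rw [← QnMass_eq_lintegral hMmeas hWmeas]
  exact QnMass_ne_zero_ne_top hmass n θ ν

theorem Pinched.PhiFun_zitInv_mem {s w : ℝ≥0∞} {n : ℕ} {ω : Env H} {f : E → ℝ≥0∞}
    (hf : Measurable f)
    (h : Pinched s w (QnFun M W n (zitInv n ω) f) (QnFun M W n (zitInv n ω) 1))
    {m : ℕ} (hnm : n ≤ m) (σ : Measure E) [IsProbabilityMeasure σ] :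
    s ≤ PhiFun M W m (zitInv m ω) σ f ∧ PhiFun M W m (zitInv m ω) σ f ≤ s + w := by
  obtain ⟨j, rfl⟩ : ∃ j, m = j + n := ⟨m - n, by omega⟩
  -- `Φ_{j+n}^{z^{-(j+n)}ω}(σ) = Φ_n^{z^{-n}ω}(σ Q_j^{z^{-(j+n)}ω})`
  have hσ := QnMass_ne_zero_ne_top hmass (j + n) (zitInv (j + n) ω) σ
  rw [QnMass_add hMmeas hWmeas, zit_zitInv] at hσ
  rw [PhiFun_add hMmeas hWmeas, zit_zitInv]
  exact h.PhiFun_mem hMmeas hWmeas hf hσ.1 hσ.2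

end Normalised

structure IsDoeblin (M : Env H → E → Measure E) (W : Env H → E → ℝ) (ν : Measure E)
    (εm εp : ℝ) : Prop where
  isProbabilityMeasure : ∀ ω x, IsProbabilityMeasure (M ω x)
  measurable_M : Measurable fun p : Env H × E => M p.1 p.2
  measurable_W : Measurable fun p : Env H × E => W p.1 p.2
  pos : 0 < εm
  le : εm ≤ εp
  bounds : ∀ ω x, ENNReal.ofReal εm • ν ≤ M ω x ∧ M ω x ≤ ENNReal.ofReal εp • ν
  mass : ∀ n : ℕ, 1 ≤ n → ∀ ω, ∀ σ : Measure E, IsProbabilityMeasure σ →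
    0 < QnMass M W n ω σ ∧ QnMass M W n ω σ < ∞

namespace IsDoeblin

variable {M : Env H → E → Measure E} {W : Env H → E → ℝ} {ν : Measure E} {εm εp : ℝ}
  [IsProbabilityMeasure ν] (hD : IsDoeblin M W ν εm εp)
include hD

theorem exists_pinched_QnFun {n : ℕ} (hn : 1 ≤ n) (θ : Env H) {G : E → ℝ≥0∞}
    (hG : Measurable G) (hνG : ∫⁻ y, G y ∂ν ≠ ∞) :
    ∃ s, ENNReal.ofReal εm * ∫⁻ y, G y ∂ν ≤ s ∧
      s + ENNReal.ofReal (1 - εm / εp) ^ n * (ENNReal.ofReal εp * ∫⁻ y, G y ∂ν)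
        ≤ ENNReal.ofReal εp * ∫⁻ y, G y ∂ν ∧
      Pinched s (ENNReal.ofReal (1 - εm / εp) ^ n * (ENNReal.ofReal εp * ∫⁻ y, G y ∂ν))
        (QnFun M W n θ G) (QnFun M W n θ 1) := by
  obtain ⟨k, rfl⟩ : ∃ k, n = k + 1 := ⟨n - 1, by omega⟩
  have := hD.isProbabilityMeasure
  have hεp : 0 < εp := hD.pos.trans_le hD.le
  set νG := ∫⁻ y, G y ∂ν
  have hsplit : ENNReal.ofReal εm * νG + ENNReal.ofReal (εp - εm) * νG
      = ENNReal.ofReal εp * νG := by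
    rw [← add_mul, ← ENNReal.ofReal_add hD.pos.le (by linarith [hD.le]), add_sub_cancel]
  -- the last kernel of `Q_{k+1}^θ` already pinches `G` against `1`
  have h₀ : Pinched (ENNReal.ofReal εm * νG) (ENNReal.ofReal (εp - εm) * νG)
      (QnFun M W 1 (zit k θ) G) (QnFun M W 1 (zit k θ) 1) := by
    have hM : Pinched (ENNReal.ofReal εm * νG) (ENNReal.ofReal (εp - εm) * νG)
        (fun x => ∫⁻ y, G y ∂M (zit k θ) x)
        (fun x => ∫⁻ y, (1 : E → ℝ≥0∞) y ∂M (zit k θ) x) := fun x => by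
      simp only [Pi.one_apply, lintegral_one, measure_univ, mul_one, hsplit]
      exact ⟨mul_lintegral_le_lintegral_of_smul_le (hD.bounds _ x).1 G,
        lintegral_le_mul_lintegral_of_le_smul (hD.bounds _ x).2 G⟩
    simpa only [← QnFun_one hD.measurable_M hD.measurable_W] using
      hM.const_mul fun x => ENNReal.ofReal (W (zit k θ) x)
  have hfin : ∀ j < k, ∫⁻ y, QnFun M W j (zit (k - j) θ) (QnFun M W 1 (zit k θ) 1) y ∂ν ≠ ∞ := by
    intro j hj
    rw [show zit k θ = zit j (zit (k - j) θ) by rw [zit_zit, Nat.sub_add_cancel hj.le],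
      ← QnFun_add hD.measurable_M hD.measurable_W j 1 _ measurable_one]
    exact (lintegral_QnFun_one_ne_zero_ne_top hD.measurable_M hD.measurable_W hD.mass _ _).2
  obtain ⟨s, hs, hsw, hpinch⟩ := h₀.contract_QnFun hD.measurable_M hD.measurable_W hD.pos hD.le
    hD.bounds (measurable_QnFun hD.measurable_M hD.measurable_W 1 _ hG)
    (measurable_QnFun hD.measurable_M hD.measurable_W 1 _ measurable_one)
    (ENNReal.mul_ne_top ENNReal.ofReal_ne_top hνG) k θ hfin
  have hwidth : ENNReal.ofReal (1 - εm / εp) ^ k * (ENNReal.ofReal (εp - εm) * νG)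
      = ENNReal.ofReal (1 - εm / εp) ^ (k + 1) * (ENNReal.ofReal εp * νG) := by
    rw [pow_succ, mul_assoc, ← mul_assoc (ENNReal.ofReal _) (ENNReal.ofReal εp),
      ← ENNReal.ofReal_mul (by linarith [(div_le_one hεp).2 hD.le])]
    congr 3
    field_simp
  rw [← QnFun_add hD.measurable_M hD.measurable_W k 1 θ hG,
    ← QnFun_add hD.measurable_M hD.measurable_W k 1 θ measurable_one, hwidth] at hpinch
  rw [hwidth, hsplit] at hsw
  exact ⟨s, hs, hsw, hpinch⟩

theorem exists_pinched_QnFun_indicator {n : ℕ} (hn : 1 ≤ n) (θ : Env H) {A : Set E}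
    (hA : MeasurableSet A) :
    ∃ s, s + ENNReal.ofReal (1 - εm / εp) ^ n * (ENNReal.ofReal εp * ν A)
        ≤ ENNReal.ofReal εp * ν A ∧
      Pinched s (ENNReal.ofReal (1 - εm / εp) ^ n * (ENNReal.ofReal εp * ν A))
        (QnFun M W n θ (A.indicator 1)) (QnFun M W n θ 1) := by
  obtain ⟨s, -, hs, h⟩ := hD.exists_pinched_QnFun hn θ (measurable_one.indicator hA)
    (by rw [lintegral_indicator_one hA]; exact measure_ne_top ν A)
  rw [lintegral_indicator_one hA] at hs h
  exact ⟨s, hs, h⟩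

theorem PhiMeas_le_smul {n : ℕ} (hn : 1 ≤ n) (θ : Env H) (σ : Measure E)
    [IsProbabilityMeasure σ] : PhiMeas M W n θ σ ≤ ENNReal.ofReal εp • ν := by
  refine Measure.le_iff.2 fun A hA => ?_
  obtain ⟨s, hs, h⟩ := hD.exists_pinched_QnFun_indicator hn θ hA
  have hσ := QnMass_ne_zero_ne_top hD.mass n θ σ
  rw [PhiMeas_apply, PhiSet_eq_PhiFun n θ σ hA]
  exact (h.PhiFun_mem hD.measurable_M hD.measurable_W (measurable_one.indicator hA) hσ.1
    hσ.2).2.trans hs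

theorem abs_toReal_PhiSet_sub_le {n m : ℕ} (hn : 1 ≤ n) (hnm : n ≤ m) (ω : Env H)
    {A : Set E} (hA : MeasurableSet A) (σ τ : Measure E) [IsProbabilityMeasure σ]
    [IsProbabilityMeasure τ] :
    |(PhiSet M W m (zitInv m ω) σ A).toReal - (PhiSet M W n (zitInv n ω) τ A).toReal|
      ≤ εp * (1 - εm / εp) ^ n := by
  have hεp : 0 < εp := hD.pos.trans_le hD.le
  have hρ : 0 ≤ 1 - εm / εp := by linarith [(div_le_one hεp).2 hD.le]
  obtain ⟨s, hs, h⟩ := hD.exists_pinched_QnFun_indicator hn (zitInv n ω) hA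
  have hf : Measurable (A.indicator (1 : E → ℝ≥0∞)) := measurable_one.indicator hA
  rw [PhiSet_eq_PhiFun _ _ _ hA, PhiSet_eq_PhiFun _ _ _ hA]
  refine (ENNReal.abs_toReal_sub_toReal_le_of_mem_Icc (ne_top_of_le_ne_top ENNReal.ofReal_ne_top
    (hs.trans (mul_le_of_le_one_right' prob_le_one)))
    (h.PhiFun_zitInv_mem hD.measurable_M hD.measurable_W hD.mass hf hnm σ)
    (h.PhiFun_zitInv_mem hD.measurable_M hD.measurable_W hD.mass hf le_rfl τ)).trans ?_
  rw [ENNReal.toReal_mul, ENNReal.toReal_pow, ENNReal.toReal_ofReal hρ, ENNReal.toReal_mul,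
    ENNReal.toReal_ofReal hεp.le, mul_comm]
  gcongr
  exact mul_le_of_le_one_right hεp.le (ENNReal.toReal_le_of_le_ofReal zero_le_one
    (ENNReal.ofReal_one ▸ prob_le_one))

theorem exists_tendsto_toReal_PhiSet (ω : Env H) {A : Set E} (hA : MeasurableSet A) :
    ∃ l : ℝ, ∀ σ : ProbabilityMeasure E,
      Tendsto (fun n => (PhiSet M W n (zitInv n ω) σ A).toReal) atTop (𝓝 l) ∧
      ∀ n, 1 ≤ n → |(PhiSet M W n (zitInv n ω) σ A).toReal - l| ≤ εp * (1 - εm / εp) ^ n := by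
  have hεp : 0 < εp := hD.pos.trans_le hD.le
  refine exists_tendsto_of_abs_sub_le _ ?_ ⟨ν, inferInstance⟩ fun n hn m hnm σ τ =>
    hD.abs_toReal_PhiSet_sub_le hn hnm ω hA σ τ
  simpa using (_root_.tendsto_pow_atTop_nhds_zero_of_lt_one
    (by linarith [(div_le_one hεp).2 hD.le]) (by linarith [div_pos hD.pos hεp])).const_mul εp

/-- `η^ω` is the setwise limit of `Φ_n^{z^{-n}ω}(ν)`; it is a measure because these are all
dominated by `εp ν`. -/
theorem exists_measure_tendsto_PhiSet (ω : Env H) :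
    ∃ η : Measure E, IsProbabilityMeasure η ∧ ∀ A, MeasurableSet A →
      (∀ σ : Measure E, IsProbabilityMeasure σ →
        Tendsto (fun n => PhiSet M W n (zitInv n ω) σ A) atTop (𝓝 (η A))) ∧
      ∀ n, 1 ≤ n → ∀ σ : Measure E, IsProbabilityMeasure σ →
        |(PhiSet M W n (zitInv n ω) σ A).toReal - η.real A| ≤ εp * (1 - εm / εp) ^ n := by
  have hlim : ∀ A : Set E, ∃ l : ℝ, MeasurableSet A → ∀ σ : ProbabilityMeasure E,
      Tendsto (fun n => (PhiSet M W n (zitInv n ω) σ A).toReal) atTop (𝓝 l) ∧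
      ∀ n, 1 ≤ n → |(PhiSet M W n (zitInv n ω) σ A).toReal - l| ≤ εp * (1 - εm / εp) ^ n := by
    intro A
    by_cases hA : MeasurableSet A
    · obtain ⟨l, hl⟩ := hD.exists_tendsto_toReal_PhiSet ω hA
      exact ⟨l, fun _ => hl⟩
    · exact ⟨0, fun h => absurd h hA⟩
  choose l hl using hlim
  have htend : ∀ A, MeasurableSet A → ∀ σ : Measure E, IsProbabilityMeasure σ →
      Tendsto (fun n => PhiSet M W n (zitInv n ω) σ A) atTop (𝓝 (ENNReal.ofReal (l A))) :=
    fun A hA σ hσ => (ENNReal.tendsto_ofReal (hl A hA ⟨σ, hσ⟩).1).congr fun n =>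
      ENNReal.ofReal_toReal (ne_top_of_le_ne_top one_ne_top (PhiSet_le_one _ _ _ _))
  obtain ⟨η, hη⟩ := Measure.exists_eq_of_tendsto_of_le_smul ENNReal.ofReal_ne_top
    (fun n => hD.PhiMeas_le_smul (Nat.le_add_left 1 n) _ ν) fun A hA => by
      simp_rw [PhiMeas_apply]
      exact (tendsto_add_atTop_iff_nat 1).2 (htend A hA ν inferInstance)
  refine ⟨η, ⟨?_⟩, fun A hA => ⟨fun σ hσ => hη A hA ▸ htend A hA σ hσ, fun n hn σ hσ => ?_⟩⟩
  · rw [hη _ MeasurableSet.univ]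
    refine tendsto_nhds_unique (htend _ MeasurableSet.univ ν inferInstance)
      (tendsto_const_nhds.congr fun n => ?_)
    have hν := QnMass_ne_zero_ne_top hD.mass n (zitInv n ω) ν
    exact (ENNReal.div_self hν.1 hν.2).symm
  · have hl0 : 0 ≤ l A := ge_of_tendsto' (hl A hA ⟨ν, inferInstance⟩).1 fun _ => toReal_nonneg
    rw [measureReal_def, hη A hA, ENNReal.toReal_ofReal hl0]
    exact (hl A hA ⟨σ, hσ⟩).2 n hn

theorem exists_pinched_QnFun_rel {n : ℕ} (hn : 1 ≤ n) (θ : Env H) {G : E → ℝ≥0∞}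
    (hG : Measurable G) (hνG : ∫⁻ y, G y ∂ν ≠ ∞) :
    ∃ s, ENNReal.ofReal εm * ∫⁻ y, G y ∂ν ≤ s ∧ s ≠ ∞ ∧
      Pinched s (ENNReal.ofReal (εp / εm) * ENNReal.ofReal (1 - εm / εp) ^ n * s)
        (QnFun M W n θ G) (QnFun M W n θ 1) := by
  obtain ⟨s, hs, hsw, h⟩ := hD.exists_pinched_QnFun hn θ hG hνG
  refine ⟨s, hs, ne_top_of_le_ne_top (ENNReal.mul_ne_top ofReal_ne_top hνG)
    (le_self_add.trans hsw), h.mono_width ?_⟩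
  have hεpm : ENNReal.ofReal εp = ENNReal.ofReal (εp / εm) * ENNReal.ofReal εm := by
    rw [← ENNReal.ofReal_mul (div_nonneg (hD.pos.trans_le hD.le).le hD.pos.le),
      div_mul_cancel₀ _ hD.pos.ne']
  calc ENNReal.ofReal (1 - εm / εp) ^ n * (ENNReal.ofReal εp * ∫⁻ y, G y ∂ν)
      = ENNReal.ofReal (εp / εm) * ENNReal.ofReal (1 - εm / εp) ^ n
          * (ENNReal.ofReal εm * ∫⁻ y, G y ∂ν) := by rw [hεpm]; ring
    _ ≤ _ := by gcongr

theorem exists_pinched_QnFun_one_add {n : ℕ} (hn : 1 ≤ n) (j : ℕ) (ω : Env H) :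
    ∃ s, s ≠ 0 ∧ Pinched s (ENNReal.ofReal (εp / εm) * ENNReal.ofReal (1 - εm / εp) ^ n * s)
      (QnFun M W (n + j) ω 1) (QnFun M W n ω 1) := by
  have hνG := lintegral_QnFun_one_ne_zero_ne_top (ν := ν) hD.measurable_M hD.measurable_W
    hD.mass j (zit n ω)
  obtain ⟨s, hs, -, h⟩ := hD.exists_pinched_QnFun_rel hn ω
    (measurable_QnFun hD.measurable_M hD.measurable_W j (zit n ω) measurable_one) hνG.2
  rw [← QnFun_add hD.measurable_M hD.measurable_W n j ω measurable_one] at h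
  exact ⟨s, ((ENNReal.mul_pos (ENNReal.ofReal_pos.2 hD.pos).ne' hνG.1).trans_le hs).ne', h⟩

theorem exists_PhiFun_QnFun_one_mem {n : ℕ} (hn : 1 ≤ n) (ω : Env H) :
    ∃ s, ENNReal.ofReal εm * ∫⁻ y, QnFun M W n ω 1 y ∂ν ≤ s ∧ s ≠ 0 ∧ s ≠ ∞ ∧
      ∀ m, n ≤ m → ∀ σ : Measure E, IsProbabilityMeasure σ →
        s ≤ PhiFun M W m (zitInv m ω) σ (QnFun M W n ω 1) ∧
        PhiFun M W m (zitInv m ω) σ (QnFun M W n ω 1)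
          ≤ s + ENNReal.ofReal (εp / εm) * ENNReal.ofReal (1 - εm / εp) ^ n * s := by
  have hF := measurable_QnFun hD.measurable_M hD.measurable_W n ω measurable_one
  have hνF := lintegral_QnFun_one_ne_zero_ne_top (ν := ν) hD.measurable_M hD.measurable_W
    hD.mass n ω
  obtain ⟨s, hs, hstop, h⟩ := hD.exists_pinched_QnFun_rel hn (zitInv n ω) hF hνF.2
  exact ⟨s, hs, ((ENNReal.mul_pos (ENNReal.ofReal_pos.2 hD.pos).ne' hνF.1).trans_le hs).ne',
    hstop, fun m hnm σ _ =>
      h.PhiFun_zitInv_mem hD.measurable_M hD.measurable_W hD.mass hF hnm σ⟩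

variable {Δ2 : ℝ} (hΔ2 : 0 < Δ2)
  (hcomp : ∀ n : ℕ, 1 ≤ n → ∀ ω, ∀ σ₁ σ₂ : Measure E,
    IsProbabilityMeasure σ₁ → IsProbabilityMeasure σ₂ →
    QnMass M W n ω σ₁ ≤ ENNReal.ofReal Δ2 * QnMass M W n ω σ₂)
include hΔ2 hcomp

/-- With `D = (εp / εm) ρ^n`, the numerator of the ratio at time `m ≥ n` is `≈ s' Q_n^ω(1)(x)`
and its denominator is `≈ s' s`, both up to a factor `1 + D`, so the ratio is close to
`V = Q_n^ω(1)(x) / s`. -/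
theorem exists_ratioH_mem {n : ℕ} (hn : 1 ≤ n) (ω : Env H) (x : E) :
    ∃ V, V ≤ ENNReal.ofReal (Δ2 / εm) ∧ ∀ m, n ≤ m → ∀ σ : Measure E, IsProbabilityMeasure σ →
      V / (1 + ENNReal.ofReal (εp / εm) * ENNReal.ofReal (1 - εm / εp) ^ n) ^ 2
          ≤ ratioH M W σ m ω x ∧
        ratioH M W σ m ω x
          ≤ (1 + ENNReal.ofReal (εp / εm) * ENNReal.ofReal (1 - εm / εp) ^ n) * V := by
  set D := ENNReal.ofReal (εp / εm) * ENNReal.ofReal (1 - εm / εp) ^ n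
  obtain ⟨s, hs, hs₀, hstop, hΦ⟩ := hD.exists_PhiFun_QnFun_one_mem hn ω
  refine ⟨QnFun M W n ω 1 x / s, ENNReal.div_le_of_le_mul ?_, fun m hnm σ hσ => ?_⟩
  · calc QnFun M W n ω 1 x = QnMass M W n ω (Measure.dirac x) :=
          (QnMass_dirac hD.measurable_M hD.measurable_W n ω x).symm
      _ ≤ ENNReal.ofReal Δ2 * QnMass M W n ω ν := hcomp n hn ω _ ν inferInstance inferInstance
      _ = ENNReal.ofReal (Δ2 / εm) * (ENNReal.ofReal εm * ∫⁻ y, QnFun M W n ω 1 y ∂ν) := by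
        rw [QnMass_eq_lintegral hD.measurable_M hD.measurable_W, ← mul_assoc,
          ← ENNReal.ofReal_mul (div_nonneg hΔ2.le hD.pos.le), div_mul_cancel₀ _ hD.pos.ne']
      _ ≤ ENNReal.ofReal (Δ2 / εm) * s := by gcongr
  obtain ⟨j, rfl⟩ : ∃ j, m = n + j := ⟨m - n, by omega⟩
  obtain ⟨s', hs'₀, h⟩ := hD.exists_pinched_QnFun_one_add hn j ω
  have hPhi := h.PhiFun_mul_le (M := M) (W := W)
    (measurable_QnFun hD.measurable_M hD.measurable_W n ω measurable_one) (n + j)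
    (zitInv (n + j) ω) σ
  have hP_up : PhiFun M W (n + j) (zitInv (n + j) ω) σ (QnFun M W (n + j) ω 1)
      ≤ (1 + D) ^ 2 * (s' * s) :=
    calc _ ≤ (s' + D * s') * (s + D * s) := hPhi.2.trans (by gcongr; exact (hΦ _ hnm σ hσ).2)
      _ = (1 + D) ^ 2 * (s' * s) := by ring
  have hFx : QnFun M W (n + j) ω 1 x ≠ ∞ := by
    rw [← QnMass_dirac hD.measurable_M hD.measurable_W]
    exact (QnMass_ne_zero_ne_top hD.mass _ ω _).2
  rw [ratioH_eq]
  exact ENNReal.div_sq_le_div_and_div_le_mul hs'₀ hs₀ hstop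
    (ENNReal.mul_ne_top ofReal_ne_top (ENNReal.pow_ne_top ofReal_ne_top)) hFx (h x).1
    ((h x).2.trans_eq (by ring)) ((mul_le_mul_right (hΦ _ hnm σ hσ).1 s').trans hPhi.1) hP_up

theorem abs_toReal_ratioH_sub_le {n m : ℕ} (hn : 1 ≤ n) (hnm : n ≤ m) (ω : Env H) (x : E)
    (σ τ : Measure E) [IsProbabilityMeasure σ] [IsProbabilityMeasure τ] :
    |(ratioH M W σ m ω x).toReal - (ratioH M W τ n ω x).toReal|
      ≤ 4 * (Δ2 / εm) * (εp / εm) * (1 - εm / εp) ^ n := by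
  have hεp : 0 < εp := hD.pos.trans_le hD.le
  have hρ : 0 ≤ 1 - εm / εp := by linarith [(div_le_one hεp).2 hD.le]
  obtain ⟨V, hV, hmem⟩ := hD.exists_ratioH_mem hΔ2 hcomp hn ω x
  have hVtop : V ≠ ∞ := ne_top_of_le_ne_top ofReal_ne_top hV
  have hDtop : ENNReal.ofReal (εp / εm) * ENNReal.ofReal (1 - εm / εp) ^ n ≠ ∞ :=
    ENNReal.mul_ne_top ofReal_ne_top (ENNReal.pow_ne_top ofReal_ne_top)
  have hσ := ENNReal.abs_toReal_sub_le_of_div_sq_le_of_le_mul hVtop hDtop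
    (hmem m hnm σ ‹_›).1 (hmem m hnm σ ‹_›).2
  have hτ := ENNReal.abs_toReal_sub_le_of_div_sq_le_of_le_mul hVtop hDtop
    (hmem n le_rfl τ ‹_›).1 (hmem n le_rfl τ ‹_›).2
  rw [ENNReal.toReal_mul, ENNReal.toReal_pow, ENNReal.toReal_ofReal hρ,
    ENNReal.toReal_ofReal (div_nonneg hεp.le hD.pos.le)] at hσ hτ
  have hVR := mul_le_mul_of_nonneg_left
    (ENNReal.toReal_le_of_le_ofReal (div_nonneg hΔ2.le hD.pos.le) hV)
    (mul_nonneg (div_nonneg hεp.le hD.pos.le) (pow_nonneg hρ n))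
  rw [abs_le] at hσ hτ ⊢
  constructor <;> linarith

theorem exists_tendsto_ratioH (ω : Env H) (x : E) :
    ∃ l : ℝ, ∀ σ : Measure E, IsProbabilityMeasure σ →
      Tendsto (fun n => (ratioH M W σ n ω x).toReal) atTop (𝓝 l) ∧
      ∀ n, 1 ≤ n → |(ratioH M W σ n ω x).toReal - l|
        ≤ 4 * (Δ2 / εm) * (εp / εm) * (1 - εm / εp) ^ n := by
  have hεp : 0 < εp := hD.pos.trans_le hD.le
  have hε : Tendsto (fun n => 4 * (Δ2 / εm) * (εp / εm) * (1 - εm / εp) ^ n) atTop (𝓝 0) := by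
    simpa using (_root_.tendsto_pow_atTop_nhds_zero_of_lt_one
      (by linarith [(div_le_one hεp).2 hD.le]) (by linarith [div_pos hD.pos hεp])).const_mul
      (4 * (Δ2 / εm) * (εp / εm))
  obtain ⟨l, hl⟩ := exists_tendsto_of_abs_sub_le
    (fun (σ : ProbabilityMeasure E) n => (ratioH M W σ n ω x).toReal) hε ⟨ν, inferInstance⟩
    fun n hn m hnm σ τ => hD.abs_toReal_ratioH_sub_le hΔ2 hcomp hn hnm ω x σ τ
  exact ⟨l, fun σ hσ => hl ⟨σ, hσ⟩⟩

end IsDoeblin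

theorem proposition2_part2_general
    (M : Env H → E → Measure E) (W : Env H → E → ℝ)
    (hMprob : ∀ ω x, IsProbabilityMeasure (M ω x))
    (hMmeas : Measurable fun p : Env H × E => M p.1 p.2)
    (hWmeas : Measurable fun p : Env H × E => W p.1 p.2)
    -- (B2)
    (εm εp : ℝ) (hεm : 0 < εm) (hεmp : εm ≤ εp)
    (ν : Measure E) [IsProbabilityMeasure ν]
    (hB2b : ∀ ω x, ∀ A : Set E, MeasurableSet A →
        ENNReal.ofReal εm * ν A ≤ M ω x A ∧ M ω x A ≤ ENNReal.ofReal εp * ν A)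
    (Δ2 : ℝ) (hΔ2 : 0 < Δ2)
    (hB2c : ∀ n : ℕ, 1 ≤ n → ∀ ω, ∀ σ₁ σ₂ : Measure E,
        IsProbabilityMeasure σ₁ → IsProbabilityMeasure σ₂ →
        QnMass M W n ω σ₁ ≤ ENNReal.ofReal Δ2 * QnMass M W n ω σ₂)
    (hB2d : ∀ n : ℕ, 1 ≤ n → ∀ ω, ∀ σ : Measure E, IsProbabilityMeasure σ →
        0 < QnMass M W n ω σ ∧ QnMass M W n ω σ < ∞) :
    ∃ η : Env H → Measure E, ∃ h : Env H → E → ℝ,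
      (∀ ω, IsProbabilityMeasure (η ω)) ∧
      -- the limits hold for every probability measure σ (independence of σ)
      (∀ σ : Measure E, IsProbabilityMeasure σ → ∀ ω,
        (∀ A : Set E, MeasurableSet A →
          Tendsto (fun n : ℕ => PhiSet M W n (zitInv n ω) σ A) atTop (𝓝 (η ω A))) ∧
        (∀ x, Tendsto (fun n : ℕ => (ratioH M W σ n ω x).toReal)
          atTop (𝓝 (h ω x)))) ∧
      -- geometric rates, uniform in ω, x and σ
      ∃ C ρ : ℝ, ρ < 1 ∧
        (∀ n : ℕ, 1 ≤ n → ∀ φ : E → ℝ, Measurable φ → ∀ B : ℝ, (∀ x, |φ x| ≤ B) →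
          ∀ ω, ∀ σ : Measure E, IsProbabilityMeasure σ →
            |(∫ y, φ y ∂(PhiMeas M W n (zitInv n ω) σ)) - ∫ y, φ y ∂(η ω)|
              ≤ C * ρ ^ n * B) ∧
        (∀ n : ℕ, 1 ≤ n → ∀ ω, ∀ x : E, ∀ σ : Measure E, IsProbabilityMeasure σ →
            |(ratioH M W σ n ω x).toReal - h ω x| ≤ C * ρ ^ n) := by
  have hD : IsDoeblin M W ν εm εp := ⟨hMprob, hMmeas, hWmeas, hεm, hεmp,
    fun ω x => Measure.smul_le_and_le_smul (hB2b ω x), hB2d⟩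
  choose η hηprob hη using hD.exists_measure_tendsto_PhiSet
  choose h hh using hD.exists_tendsto_ratioH hΔ2 hB2c
  have hεp : 0 < εp := hεm.trans_le hεmp
  set ρ := 1 - εm / εp
  have hρ : 0 ≤ ρ := by linarith [(div_le_one hεp).2 hεmp]
  refine ⟨η, h, hηprob, fun σ hσ ω => ⟨fun A hA => (hη ω A hA).1 σ hσ,
    fun x => (hh ω x σ hσ).1⟩, 2 * εp + 4 * (Δ2 / εm) * (εp / εm), ρ,
    by linarith [div_pos hεm hεp], fun n hn φ hφ B hB ω σ hσ => ?_,
    fun n hn ω x σ hσ => ((hh ω x σ hσ).2 n hn).trans ?_⟩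
  · have := isProbabilityMeasure_PhiMeas hB2d n (zitInv n ω) σ
    have hB0 : 0 ≤ B :=
      (nonempty_of_isProbabilityMeasure ν).elim fun x => (abs_nonneg _).trans (hB x)
    calc _ ≤ 2 * B * (εp * ρ ^ n) :=
          abs_integral_sub_integral_le_of_abs_measureReal_sub_le (fun A hA => by
            rw [measureReal_def, PhiMeas_apply]; exact (hη ω A hA).2 n hn σ hσ) hφ hB
      _ = 2 * εp * ρ ^ n * B := by ring
      _ ≤ (2 * εp + 4 * (Δ2 / εm) * (εp / εm)) * ρ ^ n * B := by
        gcongr; exact le_add_of_nonneg_right (by positivity)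
  · gcongr
    exact le_add_of_nonneg_left (by positivity)

/-- **Proposition 2, part 2.** Assuming (B2), the limits `η^ω` and `h(ω,x)` do not
depend on the choice of the probability measure `σ`, and the convergence holds at a
geometric rate `C·ρ^n`, uniformly in `ω`, `x` and `σ`. -/
theorem proposition2_part2
    (M : Env H → E → Measure E) (W : Env H → E → ℝ)
    (hMprob : ∀ ω x, IsProbabilityMeasure (M ω x))
    (hMmeas : Measurable fun p : Env H × E => M p.1 p.2)
    (hWmeas : Measurable fun p : Env H × E => W p.1 p.2)
    (hWnn : ∀ ω x, 0 ≤ W ω x) (CW : ℝ) (hWbdd : ∀ ω x, W ω x ≤ CW)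
    -- (B2)
    (Δ1 : ℝ) (hΔ1 : 0 < Δ1)
    (hB2a : ∀ ω x u, ∫⁻ y, ENNReal.ofReal (W (shift ω) y) ∂(M ω x)
        ≤ ENNReal.ofReal Δ1 * ∫⁻ y, ENNReal.ofReal (W (shift ω) y) ∂(M ω u))
    (εm εp : ℝ) (hεm : 0 < εm) (hεmp : εm ≤ εp)
    (ν : Measure E) [IsProbabilityMeasure ν]
    (hB2b : ∀ ω x, ∀ A : Set E, MeasurableSet A →
        ENNReal.ofReal εm * ν A ≤ M ω x A ∧ M ω x A ≤ ENNReal.ofReal εp * ν A)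
    (Δ2 : ℝ) (hΔ2 : 0 < Δ2)
    (hB2c : ∀ n : ℕ, 1 ≤ n → ∀ ω, ∀ σ₁ σ₂ : Measure E,
        IsProbabilityMeasure σ₁ → IsProbabilityMeasure σ₂ →
        QnMass M W n ω σ₁ ≤ ENNReal.ofReal Δ2 * QnMass M W n ω σ₂)
    (hB2d : ∀ n : ℕ, 1 ≤ n → ∀ ω, ∀ σ : Measure E, IsProbabilityMeasure σ →
        0 < QnMass M W n ω σ ∧ QnMass M W n ω σ < ∞) :
    ∃ η : Env H → Measure E, ∃ h : Env H → E → ℝ,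
      (∀ ω, IsProbabilityMeasure (η ω)) ∧
      -- the limits hold for every probability measure σ (independence of σ)
      (∀ σ : Measure E, IsProbabilityMeasure σ → ∀ ω,
        (∀ A : Set E, MeasurableSet A →
          Tendsto (fun n : ℕ => PhiSet M W n (zitInv n ω) σ A) atTop (𝓝 (η ω A))) ∧
        (∀ x, Tendsto (fun n : ℕ => (ratioH M W σ n ω x).toReal)
          atTop (𝓝 (h ω x)))) ∧
      -- geometric rates, uniform in ω, x and σ
      ∃ C ρ : ℝ, ρ < 1 ∧
        (∀ n : ℕ, 1 ≤ n → ∀ φ : E → ℝ, Measurable φ → ∀ B : ℝ, (∀ x, |φ x| ≤ B) →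
          ∀ ω, ∀ σ : Measure E, IsProbabilityMeasure σ →
            |(∫ y, φ y ∂(PhiMeas M W n (zitInv n ω) σ)) - ∫ y, φ y ∂(η ω)|
              ≤ C * ρ ^ n * B) ∧
        (∀ n : ℕ, 1 ≤ n → ∀ ω, ∀ x : E, ∀ σ : Measure E, IsProbabilityMeasure σ →
            |(ratioH M W σ n ω x).toReal - h ω x| ≤ C * ρ ^ n) :=
  proposition2_part2_general M W hMprob hMmeas hWmeas εm εp hεm hεmp ν hB2b Δ2 hΔ2 hB2c hB2d

end
end

section
/- Assume (B1) and (B2), let Λ be the finite constant of Proposition 1 (the ℙ-a.s. limit of (1/n)·log μQ_n^ω(1)), and let (η,h,λ) be the eigen-triple of Proposition 2. Then Λ = 𝔼[log λ] = ∫_Ω log λ_ω ℙ(dω); equivalently, since λ_ω = Q^ω(h(zω,·))(x)/h(ω,x) for every x ∈ E, one has Λ = ∫_Ω log( Q^ω(h(zω,·))(x) / h(ω,x) ) ℙ(dω) for any x ∈ E. -/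
/-!
Iterating the eigen-equation `η^ω Q^ω = λ_ω η^{zω}` gives `η^ω Q_n^ω(1) = ∏_{k<n} λ_{z^k ω}`, and
by (B2) this mass differs from `ν Q_n^ω(1)` by at most the factor `Δ2`, so the Birkhoff averages of
`log λ` converge `ℙ`-a.s. to `Λ`. As `log λ ≤ log sup W`, a converse of Birkhoff's theorem ends the
proof: if the Birkhoff averages of a nonnegative function `g` converge a.s. to a constant `c`, then
`∫ g = c`. Fatou's lemma gives `c ≤ ∫ g`, and the reverse Fatou lemma for the bounded truncations
`min g m` gives `∫ min g m ≤ c`. The second identity is the first, rewritten with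
`Q^ω(h(zω,·))(x) = λ_ω h(ω,x)`.
-/

open MeasureTheory ENNReal Filter Topology

noncomputable section

variable {H E : Type*} [MeasurableSpace H] [MeasurableSpace E]

lemma abs_log_sub_log_le_log {a b d : ℝ} (ha : 0 < a) (hb : 0 < b) (hab : a ≤ d * b)
    (hba : b ≤ d * a) : |Real.log a - Real.log b| ≤ Real.log d := by
  have hd : 0 < d := pos_of_mul_pos_left (ha.trans_le hab) hb.le
  have h₁ := Real.log_le_log ha hab
  have h₂ := Real.log_le_log hb hba
  rw [Real.log_mul hd.ne' hb.ne'] at h₁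
  rw [Real.log_mul hd.ne' ha.ne'] at h₂
  rw [abs_sub_le_iff]
  constructor <;> linarith

lemma abs_log_toReal_sub_le_log {a b : ℝ≥0∞} {d : ℝ} (hd : 0 ≤ d) (ha : 0 < a) (ha' : a < ∞)
    (hb : 0 < b) (hb' : b < ∞) (hab : a ≤ ENNReal.ofReal d * b) (hba : b ≤ ENNReal.ofReal d * a) :
    |Real.log a.toReal - Real.log b.toReal| ≤ Real.log d := by
  refine abs_log_sub_log_le_log (toReal_pos ha.ne' ha'.ne) (toReal_pos hb.ne' hb'.ne) ?_ ?_
  · simpa [toReal_mul, toReal_ofReal hd] using toReal_mono (mul_ne_top ofReal_ne_top hb'.ne) hab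
  · simpa [toReal_mul, toReal_ofReal hd] using toReal_mono (mul_ne_top ofReal_ne_top ha'.ne) hba

lemma tendsto_inv_mul_of_abs_sub_le {u v : ℕ → ℝ} {K L : ℝ}
    (huv : ∀ᶠ n in atTop, |u n - v n| ≤ K)
    (hv : Tendsto (fun n : ℕ => (n : ℝ)⁻¹ * v n) atTop (𝓝 L)) :
    Tendsto (fun n : ℕ => (n : ℝ)⁻¹ * u n) atTop (𝓝 L) := by
  have hdiff : Tendsto (fun n : ℕ => (n : ℝ)⁻¹ * (u n - v n)) atTop (𝓝 0) := by
    refine squeeze_zero_norm' ?_ (by simpa using tendsto_inv_atTop_nhds_zero_nat.const_mul K)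
    filter_upwards [huv] with n hn
    rw [norm_mul, norm_inv, Real.norm_natCast, Real.norm_eq_abs, mul_comm]
    gcongr
  simpa [mul_sub] using hdiff.add hv

lemma inv_mul_birkhoffSum_le {α : Type*} {T : α → α} {g : α → ℝ≥0∞} {m : ℝ≥0∞}
    (hg : ∀ x, g x ≤ m) (n : ℕ) (x : α) :
    (n : ℝ≥0∞)⁻¹ * birkhoffSum T g n x ≤ m := by
  rcases eq_or_ne n 0 with rfl | hn
  · simp [birkhoffSum_zero]
  calc (n : ℝ≥0∞)⁻¹ * birkhoffSum T g n x ≤ (n : ℝ≥0∞)⁻¹ * (n * m) := by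
        gcongr
        simpa [birkhoffSum] using Finset.sum_le_sum fun k (_ : k ∈ Finset.range n) => hg (T^[k] x)
    _ = m := by
        rw [← mul_assoc, ENNReal.inv_mul_cancel (by exact_mod_cast hn) (natCast_ne_top n), one_mul]

lemma ofReal_birkhoffAverage {α : Type*} {T : α → α} {φ : α → ℝ} (hφ : ∀ x, 0 ≤ φ x)
    (n : ℕ) (x : α) :
    ENNReal.ofReal (birkhoffAverage ℝ T φ n x)
      = (n : ℝ≥0∞)⁻¹ * birkhoffSum T (fun y => ENNReal.ofReal (φ y)) n x := by
  rcases eq_or_ne n 0 with rfl | hn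
  · simp [birkhoffSum_zero]
  rw [birkhoffAverage, smul_eq_mul, ENNReal.ofReal_mul (by positivity),
    ENNReal.ofReal_inv_of_pos (by positivity), ofReal_natCast, birkhoffSum, birkhoffSum,
    ENNReal.ofReal_sum_of_nonneg fun k _ => hφ _]

section ConverseBirkhoff

variable {α : Type*} [MeasurableSpace α] {μ : Measure α} {T : α → α}

lemma measurable_birkhoffSum {M : Type*} [AddCommMonoid M] [MeasurableSpace M] [MeasurableAdd₂ M]
    (hT : Measurable T) {g : α → M} (hg : Measurable g) (n : ℕ) :
    Measurable (birkhoffSum T g n) :=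
  Finset.measurable_sum _ fun k _ => hg.comp (hT.iterate k)

lemma lintegral_birkhoffSum (hT : MeasurePreserving T μ μ) {g : α → ℝ≥0∞}
    (hg : Measurable g) (n : ℕ) :
    ∫⁻ x, birkhoffSum T g n x ∂μ = n * ∫⁻ x, g x ∂μ := by
  simp only [birkhoffSum]
  rw [lintegral_finsetSum (f := fun k x => g (T^[k] x)) _
    fun k _ => hg.comp (hT.measurable.iterate k)]
  simp [(hT.iterate _).lintegral_comp hg]

lemma lintegral_inv_mul_birkhoffSum (hT : MeasurePreserving T μ μ) {g : α → ℝ≥0∞}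
    (hg : Measurable g) {n : ℕ} (hn : n ≠ 0) :
    ∫⁻ x, (n : ℝ≥0∞)⁻¹ * birkhoffSum T g n x ∂μ = ∫⁻ x, g x ∂μ := by
  rw [lintegral_const_mul _ (measurable_birkhoffSum hT.measurable hg n),
    lintegral_birkhoffSum hT hg, ← mul_assoc, ENNReal.inv_mul_cancel (by exact_mod_cast hn)
    (natCast_ne_top n), one_mul]

variable [IsProbabilityMeasure μ]

lemma le_lintegral_of_tendsto_inv_mul_birkhoffSum (hT : MeasurePreserving T μ μ) {g : α → ℝ≥0∞}
    (hg : Measurable g) {c : ℝ≥0∞}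
    (hc : ∀ᵐ x ∂μ, Tendsto (fun n : ℕ => (n : ℝ≥0∞)⁻¹ * birkhoffSum T g n x) atTop (𝓝 c)) :
    c ≤ ∫⁻ x, g x ∂μ :=
  calc c = ∫⁻ x, liminf (fun n : ℕ => (n : ℝ≥0∞)⁻¹ * birkhoffSum T g n x) atTop ∂μ := by
        rw [lintegral_congr_ae (hc.mono fun x hx => hx.liminf_eq)]; simp
    _ ≤ liminf (fun n : ℕ => ∫⁻ x, (n : ℝ≥0∞)⁻¹ * birkhoffSum T g n x ∂μ) atTop :=
        lintegral_liminf_le fun n =>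
          measurable_const.mul (measurable_birkhoffSum hT.measurable hg n)
    _ = ∫⁻ x, g x ∂μ := by
        rw [liminf_congr ((eventually_ne_atTop 0).mono fun n hn =>
          lintegral_inv_mul_birkhoffSum hT hg hn), liminf_const]

lemma lintegral_le_of_tendsto_inv_mul_birkhoffSum (hT : MeasurePreserving T μ μ) {g : α → ℝ≥0∞}
    (hg : Measurable g) {c : ℝ≥0∞}
    (hc : ∀ᵐ x ∂μ, Tendsto (fun n : ℕ => (n : ℝ≥0∞)⁻¹ * birkhoffSum T g n x) atTop (𝓝 c)) :
    ∫⁻ x, g x ∂μ ≤ c := by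
  have hgm : ∀ m : ℕ, Measurable fun x => min (g x) m := fun m => hg.min measurable_const
  have htrunc : ∀ m : ℕ, ∫⁻ x, min (g x) m ∂μ ≤ c := fun m =>
    calc ∫⁻ x, min (g x) m ∂μ
        = limsup (fun n : ℕ => ∫⁻ x, (n : ℝ≥0∞)⁻¹ * birkhoffSum T (fun y => min (g y) m) n x ∂μ)
            atTop := by
          rw [limsup_congr ((eventually_ne_atTop 0).mono fun n hn =>
            lintegral_inv_mul_birkhoffSum hT (hgm m) hn), limsup_const]
      _ ≤ ∫⁻ x, limsup (fun n : ℕ =>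
            (n : ℝ≥0∞)⁻¹ * birkhoffSum T (fun y => min (g y) m) n x) atTop ∂μ :=
          limsup_lintegral_le (fun _ => m)
            (fun n => measurable_const.mul (measurable_birkhoffSum hT.measurable (hgm m) n))
            (fun n => ae_of_all _ (inv_mul_birkhoffSum_le (fun y => min_le_right _ _) n))
            (by simp)
      _ ≤ ∫⁻ x, limsup (fun n : ℕ => (n : ℝ≥0∞)⁻¹ * birkhoffSum T g n x) atTop ∂μ := by
          refine lintegral_mono fun x => limsup_le_limsup (Eventually.of_forall fun n => ?_)
          simp only [birkhoffSum]
          gcongr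
          exact min_le_left _ _
      _ = c := by
          rw [lintegral_congr_ae (hc.mono fun x hx => hx.limsup_eq)]; simp
  calc ∫⁻ x, g x ∂μ = ∫⁻ x, ⨆ m : ℕ, min (g x) m ∂μ := by
        simp_rw [← inf_iSup_eq, iSup_natCast, inf_top_eq]
    _ = ⨆ m : ℕ, ∫⁻ x, min (g x) m ∂μ :=
        lintegral_iSup hgm fun a b hab x => min_le_min le_rfl (by exact_mod_cast hab)
    _ ≤ c := iSup_le htrunc

theorem integral_eq_of_tendsto_birkhoffAverage (hT : MeasurePreserving T μ μ) {φ : α → ℝ}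
    (hφ : Measurable φ) (hφ0 : ∀ x, 0 ≤ φ x) {c : ℝ}
    (hc : ∀ᵐ x ∂μ, Tendsto (fun n : ℕ => birkhoffAverage ℝ T φ n x) atTop (𝓝 c)) :
    Integrable φ μ ∧ ∫ x, φ x ∂μ = c := by
  have hc0 : 0 ≤ c := by
    obtain ⟨x, hx⟩ := hc.exists
    exact ge_of_tendsto' hx fun n =>
      mul_nonneg (inv_nonneg.2 n.cast_nonneg) (Finset.sum_nonneg fun k _ => hφ0 _)
  have hcE : ∀ᵐ x ∂μ, Tendsto (fun n : ℕ => (n : ℝ≥0∞)⁻¹ *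
      birkhoffSum T (fun y => ENNReal.ofReal (φ y)) n x) atTop (𝓝 (ENNReal.ofReal c)) :=
    hc.mono fun x hx => ((ENNReal.continuous_ofReal.tendsto c).comp hx).congr fun n =>
      ofReal_birkhoffAverage hφ0 n x
  have hlint : ∫⁻ x, ENNReal.ofReal (φ x) ∂μ = ENNReal.ofReal c :=
    le_antisymm (lintegral_le_of_tendsto_inv_mul_birkhoffSum hT hφ.ennreal_ofReal hcE)
      (le_lintegral_of_tendsto_inv_mul_birkhoffSum hT hφ.ennreal_ofReal hcE)
  refine ⟨⟨hφ.aestronglyMeasurable, (hasFiniteIntegral_iff_ofReal (ae_of_all _ hφ0)).2 ?_⟩, ?_⟩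
  · simp [hlint]
  · rw [integral_eq_lintegral_of_nonneg_ae (ae_of_all _ hφ0) hφ.aestronglyMeasurable, hlint,
      toReal_ofReal hc0]

theorem integral_eq_of_tendsto_birkhoffAverage_of_le (hT : MeasurePreserving T μ μ) {f : α → ℝ}
    (hf : Measurable f) {C : ℝ} (hfC : ∀ x, f x ≤ C) {c : ℝ}
    (hc : ∀ᵐ x ∂μ, Tendsto (fun n : ℕ => birkhoffAverage ℝ T f n x) atTop (𝓝 c)) :
    Integrable f μ ∧ ∫ x, f x ∂μ = c := by
  have hsub : ∀ n ≠ 0, ∀ x,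
      birkhoffAverage ℝ T (fun y => C - f y) n x = C - birkhoffAverage ℝ T f n x := by
    intro n hn x
    rw [show (fun y => C - f y) = (fun _ => C) - f from rfl, birkhoffAverage_sub, Pi.sub_apply,
      birkhoffAverage_of_comp_eq ℝ (g := fun _ : α => C) rfl (by exact_mod_cast hn)]
    rfl
  obtain ⟨hint, hval⟩ := integral_eq_of_tendsto_birkhoffAverage hT (φ := fun x => C - f x)
    (measurable_const.sub hf) (fun x => sub_nonneg.2 (hfC x)) (c := C - c) <| hc.mono fun x hx =>
      (tendsto_const_nhds.sub hx).congr' <|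
        (eventually_ne_atTop 0).mono fun n hn => (hsub n hn x).symm
  have hfint : Integrable f μ :=
    ((integrable_const C).sub hint).congr (ae_of_all _ fun x => sub_sub_cancel C (f x))
  refine ⟨hfint, ?_⟩
  rw [integral_sub (integrable_const C) hfint, integral_const, probReal_univ, one_smul] at hval
  linarith

end ConverseBirkhoff

lemma zit_eq_iterate {H : Type*} (n : ℕ) (ω : Env H) : zit n ω = shift^[n] ω := by
  induction n with
  | zero => rfl
  | succ n ih => rw [Function.iterate_succ_apply', ← ih]; rfl

lemma measurable_Qk_s6 {M : Env H → E → Measure E} {W : Env H → E → ℝ}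
    (hM : Measurable fun p : Env H × E => M p.1 p.2)
    (hW : Measurable fun p : Env H × E => W p.1 p.2) (ω : Env H) :
    Measurable (Qk M W ω) :=
  Measure.measurable_of_measurable_coe _ fun _ hs =>
    (hW.comp measurable_prodMk_left).ennreal_ofReal.mul
      ((Measure.measurable_coe hs).comp (hM.comp measurable_prodMk_left))

lemma Qn_succ {H E : Type*} [MeasurableSpace E] {M : Env H → E → Measure E}
    {W : Env H → E → ℝ} (n : ℕ) (ω : Env H) :
    Qn M W (n + 1) ω = fun x => (Qn M W n ω x).bind (Qk M W (shift^[n] ω)) := by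
  rw [← zit_eq_iterate]; rfl

lemma measurable_Qn_s6 {H E : Type*} [MeasurableSpace E] {M : Env H → E → Measure E}
    {W : Env H → E → ℝ} (hQk : ∀ ω, Measurable (Qk M W ω)) (n : ℕ) (ω : Env H) :
    Measurable (Qn M W n ω) := by
  induction n with
  | zero => exact Measure.measurable_dirac
  | succ n ih => exact (Measure.measurable_bind' (hQk _)).comp ih

lemma bind_Qn_of_eigen {H E : Type*} [MeasurableSpace E] {M : Env H → E → Measure E}
    {W : Env H → E → ℝ} (hQk : ∀ ω, Measurable (Qk M W ω)) {η : Env H → Measure E} {lam : Env H → ℝ}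
    (heig : ∀ ω, (η ω).bind (Qk M W ω) = ENNReal.ofReal (lam ω) • η (shift ω))
    (n : ℕ) (ω : Env H) :
    (η ω).bind (Qn M W n ω)
      = (∏ k ∈ Finset.range n, ENNReal.ofReal (lam (shift^[k] ω))) • η (shift^[n] ω) := by
  induction n with
  | zero =>
    rw [Finset.prod_range_zero, one_smul, Function.iterate_zero_apply]
    exact Measure.bind_dirac
  | succ n ih =>
    rw [Qn_succ, ← Measure.bind_bind (measurable_Qn_s6 hQk n ω).aemeasurable (hQk _).aemeasurable,
      ih, Measure.bind_smul, heig, smul_smul, Finset.prod_range_succ, Function.iterate_succ_apply']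

lemma log_QnMass_of_eigen {H E : Type*} [MeasurableSpace E] {M : Env H → E → Measure E}
    {W : Env H → E → ℝ} (hQk : ∀ ω, Measurable (Qk M W ω)) {η : Env H → Measure E}
    {lam : Env H → ℝ} (hη : ∀ ω, IsProbabilityMeasure (η ω)) (hlam : ∀ ω, 0 < lam ω)
    (heig : ∀ ω, (η ω).bind (Qk M W ω) = ENNReal.ofReal (lam ω) • η (shift ω))
    (n : ℕ) (ω : Env H) :
    Real.log (QnMass M W n ω (η ω)).toReal = birkhoffSum shift (fun ω => Real.log (lam ω)) n ω := by
  rw [QnMass, bind_Qn_of_eigen hQk heig, Measure.smul_apply, measure_univ, smul_eq_mul, mul_one,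
    toReal_prod, Finset.prod_congr rfl fun k _ => toReal_ofReal (hlam (shift^[k] ω)).le,
    Real.log_prod fun k _ => (hlam _).ne']
  rfl

theorem proposition3_general
    (P : Measure (Env H)) [IsProbabilityMeasure P]
    (M : Env H → E → Measure E) (W : Env H → E → ℝ)
    (hMmeas : Measurable fun p : Env H × E => M p.1 p.2)
    (hWmeas : Measurable fun p : Env H × E => W p.1 p.2)
    (hWnn : ∀ ω x, 0 ≤ W ω x) (CW : ℝ) (hWbdd : ∀ ω x, W ω x ≤ CW)
    -- (B1)
    (hB1 : Ergodic (shift : Env H → Env H) P)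
    -- (B2)
    (ν : Measure E) [IsProbabilityMeasure ν]
    (Δ2 : ℝ) (hΔ2 : 0 < Δ2)
    (hB2c : ∀ n : ℕ, 1 ≤ n → ∀ ω, ∀ σ₁ σ₂ : Measure E,
        IsProbabilityMeasure σ₁ → IsProbabilityMeasure σ₂ →
        QnMass M W n ω σ₁ ≤ ENNReal.ofReal Δ2 * QnMass M W n ω σ₂)
    (hB2d : ∀ n : ℕ, 1 ≤ n → ∀ ω, ∀ σ : Measure E, IsProbabilityMeasure σ →
        0 < QnMass M W n ω σ ∧ QnMass M W n ω σ < ∞)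
    -- Λ: the constant of Proposition 1
    (Λ : ℝ)
    (hΛ : ∀ μ : Measure E, IsProbabilityMeasure μ →
      ∀ᵐ ω ∂P, Tendsto
        (fun n : ℕ => (1 / (n : ℝ)) * Real.log ((QnMass M W n ω μ).toReal))
        atTop (𝓝 Λ))
    -- (η, h, λ): the eigen-triple of Proposition 2, characterised by the limits
    (η : Env H → Measure E) (h : Env H → E → ℝ) (lam : Env H → ℝ)
    (hη : ∀ ω, IsProbabilityMeasure (η ω))
    (hhpos : ∀ ω x, 0 < h ω x)
    (hlammeas : Measurable lam)
    (hlampos : ∀ ω, 0 < lam ω)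
    (hlamdef : ∀ ω, lam ω = ∫ x, W ω x ∂(η ω))
    -- the eigen-equations satisfied by the triple
    (heig1 : ∀ ω, ∀ A : Set E, MeasurableSet A →
        ((η ω).bind (Qk M W ω)) A = ENNReal.ofReal (lam ω) * η (shift ω) A)
    (heig2 : ∀ ω x, ∫ y, h (shift ω) y ∂(Qk M W ω x) = lam ω * h ω x) :
    Λ = ∫ ω, Real.log (lam ω) ∂P ∧
    ∀ x : E, Λ = ∫ ω, Real.log
        ((∫ y, h (shift ω) y ∂(Qk M W ω x)) / h ω x) ∂P := by
  have hQk := measurable_Qk_s6 hMmeas hWmeas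
  have heig : ∀ ω, (η ω).bind (Qk M W ω) = ENNReal.ofReal (lam ω) • η (shift ω) :=
    fun ω => Measure.ext (heig1 ω)
  have hΛη : ∀ᵐ ω ∂P, Tendsto (fun n : ℕ => birkhoffAverage ℝ shift
      (fun ω => Real.log (lam ω)) n ω) atTop (𝓝 Λ) := by
    filter_upwards [hΛ ν inferInstance] with ω hω
    refine tendsto_inv_mul_of_abs_sub_le (K := Real.log Δ2) ?_ (by simpa only [one_div] using hω)
    filter_upwards [eventually_ge_atTop 1] with n hn
    obtain ⟨hη0, hηtop⟩ := hB2d n hn ω (η ω) (hη ω)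
    obtain ⟨hν0, hνtop⟩ := hB2d n hn ω ν inferInstance
    rw [← log_QnMass_of_eigen hQk hη hlampos heig]
    exact abs_log_toReal_sub_le_log hΔ2.le hη0 hηtop hν0 hνtop
      (hB2c n hn ω _ _ (hη ω) inferInstance) (hB2c n hn ω _ _ inferInstance (hη ω))
  have hlog_le : ∀ ω, Real.log (lam ω) ≤ Real.log CW := fun ω => by
    have := hη ω
    refine Real.log_le_log (hlampos ω) ?_
    simpa [hlamdef] using integral_mono_of_nonneg (ae_of_all _ (hWnn ω))
      (integrable_const (μ := η ω) CW) (ae_of_all _ (hWbdd ω))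
  have hint := (integral_eq_of_tendsto_birkhoffAverage_of_le hB1.toMeasurePreserving
    (Real.measurable_log.comp hlammeas) hlog_le hΛη).2
  refine ⟨hint.symm, fun x => ?_⟩
  simp_rw [heig2, mul_div_cancel_right₀ _ (hhpos _ x).ne']
  exact hint.symm

/-- **Proposition 3.** Assuming (B1) and (B2), the constant `Λ` of Proposition 1
equals `𝔼[log λ]`, and equivalently
`Λ = ∫ log( Q^ω(h(zω,·))(x) / h(ω,x) ) ℙ(dω)` for any `x ∈ E`. -/
theorem proposition3
    (P : Measure (Env H)) [IsProbabilityMeasure P]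
    (M : Env H → E → Measure E) (W : Env H → E → ℝ)
    (hMprob : ∀ ω x, IsProbabilityMeasure (M ω x))
    (hMmeas : Measurable fun p : Env H × E => M p.1 p.2)
    (hWmeas : Measurable fun p : Env H × E => W p.1 p.2)
    (hWnn : ∀ ω x, 0 ≤ W ω x) (CW : ℝ) (hWbdd : ∀ ω x, W ω x ≤ CW)
    -- (B1)
    (hB1 : Ergodic (shift : Env H → Env H) P)
    -- (B2)
    (Δ1 : ℝ) (hΔ1 : 0 < Δ1)
    (hB2a : ∀ ω x u, ∫⁻ y, ENNReal.ofReal (W (shift ω) y) ∂(M ω x)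
        ≤ ENNReal.ofReal Δ1 * ∫⁻ y, ENNReal.ofReal (W (shift ω) y) ∂(M ω u))
    (εm εp : ℝ) (hεm : 0 < εm) (hεmp : εm ≤ εp)
    (ν : Measure E) [IsProbabilityMeasure ν]
    (hB2b : ∀ ω x, ∀ A : Set E, MeasurableSet A →
        ENNReal.ofReal εm * ν A ≤ M ω x A ∧ M ω x A ≤ ENNReal.ofReal εp * ν A)
    (Δ2 : ℝ) (hΔ2 : 0 < Δ2)
    (hB2c : ∀ n : ℕ, 1 ≤ n → ∀ ω, ∀ σ₁ σ₂ : Measure E,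
        IsProbabilityMeasure σ₁ → IsProbabilityMeasure σ₂ →
        QnMass M W n ω σ₁ ≤ ENNReal.ofReal Δ2 * QnMass M W n ω σ₂)
    (hB2d : ∀ n : ℕ, 1 ≤ n → ∀ ω, ∀ σ : Measure E, IsProbabilityMeasure σ →
        0 < QnMass M W n ω σ ∧ QnMass M W n ω σ < ∞)
    -- Λ: the constant of Proposition 1
    (Λ : ℝ)
    (hΛ : ∀ μ : Measure E, IsProbabilityMeasure μ →
      ∀ᵐ ω ∂P, Tendsto
        (fun n : ℕ => (1 / (n : ℝ)) * Real.log ((QnMass M W n ω μ).toReal))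
        atTop (𝓝 Λ))
    -- (η, h, λ): the eigen-triple of Proposition 2, characterised by the limits
    (η : Env H → Measure E) (h : Env H → E → ℝ) (lam : Env H → ℝ)
    (hη : ∀ ω, IsProbabilityMeasure (η ω))
    (hηlim : ∀ σ : Measure E, IsProbabilityMeasure σ → ∀ ω, ∀ A : Set E,
      MeasurableSet A →
        Tendsto (fun n : ℕ => PhiSet M W n (zitInv n ω) σ A) atTop (𝓝 (η ω A)))
    (hhpos : ∀ ω x, 0 < h ω x)
    (hhmeas : Measurable (fun p : Env H × E => h p.1 p.2))
    (hhlim : ∀ σ : Measure E, IsProbabilityMeasure σ → ∀ ω x,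
        Tendsto (fun n : ℕ => (ratioH M W σ n ω x).toReal) atTop (𝓝 (h ω x)))
    (hlammeas : Measurable lam)
    (hlampos : ∀ ω, 0 < lam ω)
    (hlamdef : ∀ ω, lam ω = ∫ x, W ω x ∂(η ω))
    -- the eigen-equations satisfied by the triple
    (heig1 : ∀ ω, ∀ A : Set E, MeasurableSet A →
        ((η ω).bind (Qk M W ω)) A = ENNReal.ofReal (lam ω) * η (shift ω) A)
    (heig2 : ∀ ω x, ∫ y, h (shift ω) y ∂(Qk M W ω x) = lam ω * h ω x)
    (heig3 : ∀ ω, ∫ x, h ω x ∂(η ω) = 1) :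
    Λ = ∫ ω, Real.log (lam ω) ∂P ∧
    ∀ x : E, Λ = ∫ ω, Real.log
        ((∫ y, h (shift ω) y ∂(Qk M W ω x)) / h ω x) ∂P :=
  proposition3_general P M W hMmeas hWmeas hWnn CW hWbdd hB1 ν Δ2 hΔ2 hB2c hB2d Λ hΛ η h lam hη
    hhpos hlammeas hlampos hlamdef heig1 heig2

end
end

section
/- Fix integers m₁, m₂ ≥ 1. Assume (B2), and assume there is Δ3 ∈ (0,∞) such that 𝐖^{m₁}(ω,x)/𝐖^{m₁}(ω',x') ≤ Δ3 for all admissible (ω,x), (ω',x') ∈ Ω×E^{m₁}. Let M̃ be any member of the class 𝕄^{m₁,m₂}, with constants ε̃_-, ε̃_+ and reference measure ν̃, and let J(ω,x) be the total mass of the associated kernel R(ω,x,·). Then J(ω,x)/J(ω',x') ≤ α for all admissible (ω,x),(ω',x'), where α = ( (Δ3)³·(ε̃_+/ε̃_-)·(ε_+^{m₂}/ε_-^{m₂}) )² · (ε̃_+/ε̃_-). -/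
/-!
Under (B2) the weighted mixture `mixK` lies between `ε₋ ν` and `ε₊ ν`, so the particle kernel
`𝐌` lies between `ε₋^{m₂} ν^{⊗m₂}` and `ε₊^{m₂} ν^{⊗m₂}`, while `M̃` lies between `ε̃₋ ν̃` and
`ε̃₊ ν̃`. With `ψ = d𝐌/dν̃` and `t = dM̃/dν̃` the chain rule gives `∫ φ² dM̃ = ∫ ψ²/t dν̃`, so
`J(ω,x)` is squeezed between `𝐖(ω,x)² ε₋^{2m₂}/ε̃₊ · L` and `𝐖(ω,x)² ε₊^{2m₂}/ε̃₋ · L`, where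
`L = ∫ (dν^{⊗m₂}/dν̃)² dν̃`. Hence `J(ω,x) ≤ Δ3² (ε₊/ε₋)^{2m₂} (ε̃₊/ε̃₋) J(ω',x')`, and this
constant is at most `α` because `ε̃₋ ≤ ε̃₊` and `Δ3 ≥ 1` (take `(ω',x') = (ω,x)` in the bound on
weight ratios).
-/

open MeasureTheory ENNReal Filter Topology

noncomputable section

variable {H E : Type*} [MeasurableSpace H] [MeasurableSpace E]

/-- Admissibility of a particle configuration: positive total weight. -/
def Adm (W : Env H → E → ℝ) (ω : Env H) {m : ℕ} (x : Fin m → E) : Prop :=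
  0 < ∑ j, W ω (x j)

/-- The average weight `𝐖^m(ω,x) = (1/m) Σ_j W(ω,x^j)`. -/
def Wavg (W : Env H → E → ℝ) (ω : Env H) {m : ℕ} (x : Fin m → E) : ℝ :=
  (∑ j, W ω (x j)) / m

/-- The weighted mixture `Σ_j W(ω,x^j) M^ω(x^j,·) / Σ_j W(ω,x^j)`. -/
def mixK (M : Env H → E → Measure E) (W : Env H → E → ℝ) (ω : Env H)
    {m : ℕ} (x : Fin m → E) : Measure E :=
  (ENNReal.ofReal (∑ j, W ω (x j)))⁻¹ •
    ∑ j, ENNReal.ofReal (W ω (x j)) • M ω (x j)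

/-- The particle transition kernel `𝐌^{m₁,m₂}(ω,x,·)`, the `m₂`-fold product of
the weighted mixture. -/
def Mpart (M : Env H → E → Measure E) (W : Env H → E → ℝ) (m₂ : ℕ) (ω : Env H)
    {m₁ : ℕ} (x : Fin m₁ → E) : Measure (Fin m₂ → E) :=
  Measure.pi fun _ => mixK M W ω x

/-- The additive average `𝐡^m(ω,x) = (1/m) Σ_j h(ω,x^j)`. -/
def havg (h : Env H → E → ℝ) (ω : Env H) {m : ℕ} (x : Fin m → E) : ℝ :=
  (∑ j, h ω (x j)) / m

/-- The kernel `R(ω,x,dx') = 𝐖^{m₁}(ω,x)²·φ^ω(x,x')²·M̃(ω,x,dx')`, where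
`φ^ω(x,·)` is the Radon–Nikodym derivative of `𝐌^{m₁,m₂}(ω,x,·)` with respect to
`M̃(ω,x,·)`. -/
def Rker (M : Env H → E → Measure E) (W : Env H → E → ℝ) (m₁ m₂ : ℕ)
    (Mt : Env H → (Fin m₁ → E) → Measure (Fin m₂ → E))
    (ω : Env H) (x : Fin m₁ → E) : Measure (Fin m₂ → E) :=
  (Mt ω x).withDensity fun x' =>
    (ENNReal.ofReal (Wavg W ω x)) ^ 2 *
      ((Mpart M W m₂ ω x).rnDeriv (Mt ω x) x') ^ 2

/-- `J(ω,x) = R(ω,x,E^{m₂})`, the total mass of `R(ω,x,·)`. -/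
def Jmass (M : Env H → E → Measure E) (W : Env H → E → ℝ) (m₁ m₂ : ℕ)
    (Mt : Env H → (Fin m₁ → E) → Measure (Fin m₂ → E))
    (ω : Env H) (x : Fin m₁ → E) : ℝ≥0∞ :=
  Rker M W m₁ m₂ Mt ω x Set.univ

end

namespace MeasureTheory.Measure

variable {α : Type*} [MeasurableSpace α]

theorem pi_mono {ι : Type*} [Fintype ι] {β : ι → Type*} [∀ i, MeasurableSpace (β i)]
    {μ ν : ∀ i, Measure (β i)} (h : ∀ i, μ i ≤ ν i) : Measure.pi μ ≤ Measure.pi ν := by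
  refine Measure.le_iff.2 fun s hs => ?_
  rw [Measure.pi, Measure.pi, toMeasure_apply _ _ hs, toMeasure_apply _ _ hs]
  refine OuterMeasure.le_boundedBy.2 (fun t => ?_) s
  exact (OuterMeasure.boundedBy_le t).trans
    (Finset.prod_le_prod' fun i _ => Measure.le_iff'.1 (h i) _)

theorem pi_const_smul {β : Type*} [MeasurableSpace β] (m : ℕ) (ν : Measure β)
    [IsFiniteMeasure ν] {c : ℝ≥0∞} (hc : c ≠ ∞) :
    (Measure.pi fun _ : Fin m => c • ν) = c ^ m • Measure.pi fun _ : Fin m => ν := by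
  have := ν.smul_finite hc
  refine Measure.pi_eq fun s _ => ?_
  simp [Finset.prod_mul_distrib]

theorem inv_sum_smul_sum_le {ι : Type*} {s : Finset ι} {w : ι → ℝ≥0∞} {μ : ι → Measure α}
    {ρ : Measure α} (hw₀ : ∑ i ∈ s, w i ≠ 0) (hw : ∑ i ∈ s, w i ≠ ∞) (h : ∀ i ∈ s, μ i ≤ ρ) :
    (∑ i ∈ s, w i)⁻¹ • ∑ i ∈ s, w i • μ i ≤ ρ := by
  refine Measure.le_iff'.2 fun t => ?_
  simp only [smul_apply, finsetSum_apply, smul_eq_mul]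
  calc (∑ i ∈ s, w i)⁻¹ * ∑ i ∈ s, w i * μ i t
      ≤ (∑ i ∈ s, w i)⁻¹ * ((∑ i ∈ s, w i) * ρ t) := by
        rw [Finset.sum_mul]
        gcongr with i hi
        exact h i hi
    _ = ρ t := ENNReal.inv_mul_cancel_left hw₀ hw

theorem le_inv_sum_smul_sum {ι : Type*} {s : Finset ι} {w : ι → ℝ≥0∞} {μ : ι → Measure α}
    {ρ : Measure α} (hw₀ : ∑ i ∈ s, w i ≠ 0) (hw : ∑ i ∈ s, w i ≠ ∞) (h : ∀ i ∈ s, ρ ≤ μ i) :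
    ρ ≤ (∑ i ∈ s, w i)⁻¹ • ∑ i ∈ s, w i • μ i := by
  refine Measure.le_iff'.2 fun t => ?_
  simp only [smul_apply, finsetSum_apply, smul_eq_mul]
  calc ρ t = (∑ i ∈ s, w i)⁻¹ * ((∑ i ∈ s, w i) * ρ t) := (ENNReal.inv_mul_cancel_left hw₀ hw).symm
    _ ≤ (∑ i ∈ s, w i)⁻¹ * ∑ i ∈ s, w i * μ i t := by
        rw [Finset.sum_mul]
        gcongr with i hi
        exact h i hi

theorem rnDeriv_mono {μ μ' ν : Measure α} [IsFiniteMeasure μ] [IsFiniteMeasure μ'] [SigmaFinite ν]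
    (h : μ ≤ μ') : μ.rnDeriv ν ≤ᵐ[ν] μ'.rnDeriv ν := by
  have : IsFiniteMeasure (μ' - μ) := isFiniteMeasure_of_le μ' sub_le
  filter_upwards [rnDeriv_add (μ' - μ) μ ν] with x hx
  rw [← sub_add_cancel_of_le h, hx]
  exact le_add_self

variable {μ κ π ρ : Measure α}

theorem rnDeriv_le_smul_rnDeriv [IsFiniteMeasure μ] [IsFiniteMeasure π] [SigmaFinite ρ]
    {c : ℝ≥0∞} (hc : c ≠ ∞) (h : μ ≤ c • π) : μ.rnDeriv ρ ≤ᵐ[ρ] c • π.rnDeriv ρ := by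
  have := π.smul_finite hc
  filter_upwards [rnDeriv_mono (ν := ρ) h, rnDeriv_smul_left_of_ne_top π ρ hc] with x h₁ h₂
  exact h₂ ▸ h₁

theorem smul_rnDeriv_le_rnDeriv [IsFiniteMeasure μ] [IsFiniteMeasure π] [SigmaFinite ρ]
    {c : ℝ≥0∞} (hc : c ≠ ∞) (h : c • π ≤ μ) : c • π.rnDeriv ρ ≤ᵐ[ρ] μ.rnDeriv ρ := by
  have := π.smul_finite hc
  filter_upwards [rnDeriv_mono (ν := ρ) h, rnDeriv_smul_left_of_ne_top π ρ hc] with x h₁ h₂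
  exact h₂ ▸ h₁

theorem lintegral_rnDeriv_sq_eq_lintegral_div [SigmaFinite μ] [SigmaFinite κ] [SigmaFinite ρ]
    (hκρ : κ ≪ ρ) (hρκ : ρ ≪ κ) :
    ∫⁻ x, μ.rnDeriv κ x ^ 2 ∂κ = ∫⁻ x, μ.rnDeriv ρ x ^ 2 / κ.rnDeriv ρ x ∂ρ := by
  rw [← lintegral_rnDeriv_mul hκρ ((measurable_rnDeriv μ κ).pow_const 2).aemeasurable]
  refine lintegral_congr_ae ?_
  filter_upwards [hρκ.ae_le (rnDeriv_mul_rnDeriv' (μ := μ) hκρ), hρκ.ae_le (rnDeriv_pos hκρ),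
    rnDeriv_ne_top κ ρ] with x hchain hpos hfin
  rw [← hchain, Pi.mul_apply, mul_pow, sq (κ.rnDeriv ρ x), ← mul_assoc,
    ENNReal.mul_div_cancel_right hpos.ne' hfin, mul_comm]

theorem lintegral_rnDeriv_sq_le [IsFiniteMeasure μ] [IsFiniteMeasure κ] [IsFiniteMeasure π]
    [IsFiniteMeasure ρ] {a c : ℝ≥0∞} (hc : c ≠ ∞) (ha : a ≠ ∞) (hμ : μ ≤ c • π)
    (hκ : a • ρ ≤ κ) (hκρ : κ ≪ ρ) (hρκ : ρ ≪ κ) :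
    ∫⁻ x, μ.rnDeriv κ x ^ 2 ∂κ ≤ c ^ 2 / a * ∫⁻ x, π.rnDeriv ρ x ^ 2 ∂ρ := by
  rw [lintegral_rnDeriv_sq_eq_lintegral_div hκρ hρκ,
    ← lintegral_const_mul _ ((measurable_rnDeriv π ρ).pow_const 2)]
  refine lintegral_mono_ae ?_
  filter_upwards [rnDeriv_le_smul_rnDeriv hc hμ, smul_rnDeriv_le_rnDeriv ha hκ, rnDeriv_self ρ]
    with x hμx hκx hρx
  simp only [Pi.smul_apply, smul_eq_mul, hρx, mul_one] at hμx hκx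
  calc μ.rnDeriv ρ x ^ 2 / κ.rnDeriv ρ x ≤ (c * π.rnDeriv ρ x) ^ 2 / a := by gcongr
    _ = c ^ 2 / a * π.rnDeriv ρ x ^ 2 := by rw [div_eq_mul_inv, div_eq_mul_inv]; ring

theorem le_lintegral_rnDeriv_sq [IsFiniteMeasure μ] [IsFiniteMeasure κ] [IsFiniteMeasure π]
    [IsFiniteMeasure ρ] {b c : ℝ≥0∞} (hc : c ≠ ∞) (hb : b ≠ ∞) (hμ : c • π ≤ μ)
    (hκ : κ ≤ b • ρ) (hρκ : ρ ≪ κ) :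
    c ^ 2 / b * ∫⁻ x, π.rnDeriv ρ x ^ 2 ∂ρ ≤ ∫⁻ x, μ.rnDeriv κ x ^ 2 ∂κ := by
  rw [lintegral_rnDeriv_sq_eq_lintegral_div (absolutelyContinuous_of_le_smul hκ) hρκ,
    ← lintegral_const_mul _ ((measurable_rnDeriv π ρ).pow_const 2)]
  refine lintegral_mono_ae ?_
  filter_upwards [smul_rnDeriv_le_rnDeriv hc hμ, rnDeriv_le_smul_rnDeriv hb hκ, rnDeriv_self ρ]
    with x hμx hκx hρx
  simp only [Pi.smul_apply, smul_eq_mul, hρx, mul_one] at hμx hκx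
  calc c ^ 2 / b * π.rnDeriv ρ x ^ 2 = (c * π.rnDeriv ρ x) ^ 2 / b := by
        rw [div_eq_mul_inv, div_eq_mul_inv]; ring
    _ ≤ μ.rnDeriv ρ x ^ 2 / κ.rnDeriv ρ x := by gcongr

end MeasureTheory.Measure

section ParticleKernel

variable {H E : Type*} {W : Env H → E → ℝ} {ω : Env H} {m₁ : ℕ} {x : Fin m₁ → E}

theorem Adm.wavg_pos (hx : Adm W ω x) : 0 < Wavg W ω x := by
  rcases Nat.eq_zero_or_pos m₁ with rfl | hm
  · simp [Adm] at hx
  · exact div_pos hx (Nat.cast_pos.2 hm)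

theorem Adm.sum_ofReal_ne_zero (hW : ∀ j, 0 ≤ W ω (x j)) (hx : Adm W ω x) :
    ∑ j, ENNReal.ofReal (W ω (x j)) ≠ 0 := by
  rw [← ENNReal.ofReal_sum_of_nonneg fun j _ => hW j]
  exact (ENNReal.ofReal_pos.2 hx).ne'

variable [MeasurableSpace E] {M : Env H → E → Measure E} {ρ : Measure E}

theorem mixK_eq (hW : ∀ j, 0 ≤ W ω (x j)) :
    mixK M W ω x = (∑ j, ENNReal.ofReal (W ω (x j)))⁻¹ •
      ∑ j, ENNReal.ofReal (W ω (x j)) • M ω (x j) := by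
  rw [mixK, ENNReal.ofReal_sum_of_nonneg fun j _ => hW j]

theorem mixK_le (hW : ∀ j, 0 ≤ W ω (x j)) (hx : Adm W ω x) (h : ∀ j, M ω (x j) ≤ ρ) :
    mixK M W ω x ≤ ρ := by
  rw [mixK_eq hW]
  exact Measure.inv_sum_smul_sum_le (hx.sum_ofReal_ne_zero hW)
    (ENNReal.sum_ne_top.2 fun _ _ => ENNReal.ofReal_ne_top) fun j _ => h j

theorem le_mixK (hW : ∀ j, 0 ≤ W ω (x j)) (hx : Adm W ω x) (h : ∀ j, ρ ≤ M ω (x j)) :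
    ρ ≤ mixK M W ω x := by
  rw [mixK_eq hW]
  exact Measure.le_inv_sum_smul_sum (hx.sum_ofReal_ne_zero hW)
    (ENNReal.sum_ne_top.2 fun _ _ => ENNReal.ofReal_ne_top) fun j _ => h j

variable (m₂ : ℕ) {ν : Measure E} [IsFiniteMeasure ν] {c : ℝ≥0∞}

theorem Mpart_le (hW : ∀ j, 0 ≤ W ω (x j)) (hx : Adm W ω x) (hc : c ≠ ∞)
    (h : ∀ j, M ω (x j) ≤ c • ν) :
    Mpart M W m₂ ω x ≤ c ^ m₂ • Measure.pi fun _ : Fin m₂ => ν := by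
  rw [Mpart, ← Measure.pi_const_smul m₂ ν hc]
  exact Measure.pi_mono fun _ => mixK_le hW hx h

theorem le_Mpart (hW : ∀ j, 0 ≤ W ω (x j)) (hx : Adm W ω x) (hc : c ≠ ∞)
    (h : ∀ j, c • ν ≤ M ω (x j)) :
    c ^ m₂ • (Measure.pi fun _ : Fin m₂ => ν) ≤ Mpart M W m₂ ω x := by
  rw [Mpart, ← Measure.pi_const_smul m₂ ν hc]
  exact Measure.pi_mono fun _ => le_mixK hW hx h

theorem Jmass_eq (Mt : Env H → (Fin m₁ → E) → Measure (Fin m₂ → E)) :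
    Jmass M W m₁ m₂ Mt ω x = ENNReal.ofReal (Wavg W ω x) ^ 2 *
      ∫⁻ y, (Mpart M W m₂ ω x).rnDeriv (Mt ω x) y ^ 2 ∂Mt ω x := by
  rw [Jmass, Rker, withDensity_apply _ MeasurableSet.univ, Measure.restrict_univ,
    lintegral_const_mul _ ((Measure.measurable_rnDeriv _ _).pow_const 2)]

variable {Mt : Env H → (Fin m₁ → E) → Measure (Fin m₂ → E)} {νt : Measure (Fin m₂ → E)}
  [IsFiniteMeasure νt]

theorem Jmass_mem_Icc (hW : ∀ j, 0 ≤ W ω (x j)) (hx : Adm W ω x) {d a b : ℝ≥0∞} (hc : c ≠ ∞)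
    (hd : d ≠ ∞) (ha₀ : a ≠ 0) (ha : a ≠ ∞) (hb : b ≠ ∞)
    (hM : ∀ j, c • ν ≤ M ω (x j) ∧ M ω (x j) ≤ d • ν)
    (hMt : a • νt ≤ Mt ω x ∧ Mt ω x ≤ b • νt) :
    Jmass M W m₁ m₂ Mt ω x ∈ Set.Icc
      (ENNReal.ofReal (Wavg W ω x) ^ 2 * ((c ^ m₂) ^ 2 / b) *
        ∫⁻ y, (Measure.pi fun _ : Fin m₂ => ν).rnDeriv νt y ^ 2 ∂νt)
      (ENNReal.ofReal (Wavg W ω x) ^ 2 * ((d ^ m₂) ^ 2 / a) *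
        ∫⁻ y, (Measure.pi fun _ : Fin m₂ => ν).rnDeriv νt y ^ 2 ∂νt) := by
  have hMpart_le := Mpart_le m₂ hW hx hd fun j => (hM j).2
  have := (Measure.pi fun _ : Fin m₂ => ν).smul_finite (ENNReal.pow_ne_top (n := m₂) hd)
  have := isFiniteMeasure_of_le _ hMpart_le
  have := νt.smul_finite hb
  have := isFiniteMeasure_of_le _ hMt.2
  have hνtMt : νt ≪ Mt ω x :=
    (Measure.absolutelyContinuous_smul ha₀).trans (Measure.absolutelyContinuous_of_le hMt.1)
  rw [Jmass_eq, mul_assoc, mul_assoc]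
  constructor
  · gcongr
    exact Measure.le_lintegral_rnDeriv_sq (ENNReal.pow_ne_top hc) hb
      (le_Mpart m₂ hW hx hc fun j => (hM j).1) hMt.2 hνtMt
  · gcongr
    exact Measure.lintegral_rnDeriv_sq_le (ENNReal.pow_ne_top hd) ha hMpart_le hMt.1
      (Measure.absolutelyContinuous_of_le_smul hMt.2) hνtMt

end ParticleKernel

theorem Jmass_upper_const_le_mul_lower_const {Wa Wb Δ εm εp etm etp : ℝ} (m : ℕ) (hWa : 0 ≤ Wa)
    (hW : Wa ≤ Δ * Wb) (hΔ : 1 ≤ Δ) (hεm : 0 < εm) (hεmp : εm ≤ εp) (hetm : 0 < etm)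
    (hetmp : etm ≤ etp) :
    ENNReal.ofReal Wa ^ 2 * ((ENNReal.ofReal εp ^ m) ^ 2 / ENNReal.ofReal etm) ≤
      ENNReal.ofReal ((Δ ^ 3 * (etp / etm) * (εp ^ m / εm ^ m)) ^ 2 * (etp / etm)) *
        (ENNReal.ofReal Wb ^ 2 * ((ENNReal.ofReal εm ^ m) ^ 2 / ENNReal.ofReal etp)) := by
  have hεp : 0 < εp := hεm.trans_le hεmp
  have hetp : 0 < etp := hetm.trans_le hetmp
  have hWb : 0 ≤ Wb := nonneg_of_mul_nonneg_right (hWa.trans hW) (zero_lt_one.trans_le hΔ)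
  simp only [← ENNReal.ofReal_pow hWa, ← ENNReal.ofReal_pow hWb, ← ENNReal.ofReal_pow hεp.le,
    ← ENNReal.ofReal_pow hεm.le, ← ENNReal.ofReal_pow (pow_nonneg hεp.le m),
    ← ENNReal.ofReal_pow (pow_nonneg hεm.le m), ← ENNReal.ofReal_div_of_pos hetm,
    ← ENNReal.ofReal_div_of_pos hetp, ← ENNReal.ofReal_mul (sq_nonneg _)]
  rw [← ENNReal.ofReal_mul (by positivity)]
  refine ENNReal.ofReal_le_ofReal ?_
  have hRHS : (Δ ^ 3 * (etp / etm) * (εp ^ m / εm ^ m)) ^ 2 * (etp / etm) *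
      (Wb ^ 2 * ((εm ^ m) ^ 2 / etp)) = (Δ ^ 3 * (etp / etm) * Wb) ^ 2 * ((εp ^ m) ^ 2 / etm) := by
    field_simp
  have hΔ' : Δ ≤ Δ ^ 3 * (etp / etm) := by
    calc Δ ≤ Δ ^ 3 := le_self_pow₀ hΔ (by norm_num)
      _ ≤ Δ ^ 3 * (etp / etm) := le_mul_of_one_le_right (by positivity) ((one_le_div hetm).2 hetmp)
  rw [hRHS]
  gcongr
  exact hW.trans (mul_le_mul_of_nonneg_right hΔ' hWb)

variable {H E : Type*} [MeasurableSpace H] [MeasurableSpace E]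

theorem lemma2_J_ratio_general
    (M : Env H → E → Measure E) (W : Env H → E → ℝ)
    (hWnn : ∀ ω x, 0 ≤ W ω x)
    (m₁ m₂ : ℕ)
    -- (B2), minorisation/majorisation part
    (εm εp : ℝ) (hεm : 0 < εm) (hεmp : εm ≤ εp)
    (ν : Measure E) [IsProbabilityMeasure ν]
    (hB2b : ∀ ω x, ∀ A : Set E, MeasurableSet A →
        ENNReal.ofReal εm * ν A ≤ M ω x A ∧ M ω x A ≤ ENNReal.ofReal εp * ν A)
    -- uniform bound on ratios of average weights over admissible configurations
    (Δ3 : ℝ)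
    (hWr : ∀ ω ω' : Env H, ∀ x x' : Fin m₁ → E, Adm W ω x → Adm W ω' x' →
        Wavg W ω x / Wavg W ω' x' ≤ Δ3)
    -- M̃: a member of the class 𝕄^{m₁,m₂}, with its constants and reference measure
    (Mt : Env H → (Fin m₁ → E) → Measure (Fin m₂ → E))
    (etm etp : ℝ) (hetm : 0 < etm) (hetmp : etm ≤ etp)
    (νt : Measure (Fin m₂ → E)) [IsProbabilityMeasure νt]
    (hMtbd : ∀ ω, ∀ x : Fin m₁ → E, Adm W ω x →
        ∀ D : Set (Fin m₂ → E), MeasurableSet D →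
          ENNReal.ofReal etm * νt D ≤ Mt ω x D ∧
          Mt ω x D ≤ ENNReal.ofReal etp * νt D) :
    ∀ ω ω' : Env H, ∀ x x' : Fin m₁ → E, Adm W ω x → Adm W ω' x' →
      Jmass M W m₁ m₂ Mt ω x / Jmass M W m₁ m₂ Mt ω' x'
        ≤ ENNReal.ofReal
            ((Δ3 ^ 3 * (etp / etm) * (εp ^ m₂ / εm ^ m₂)) ^ 2 * (etp / etm)) := by
  intro ω ω' x x' hx hx'
  have hM : ∀ ω x, ENNReal.ofReal εm • ν ≤ M ω x ∧ M ω x ≤ ENNReal.ofReal εp • ν :=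
    fun ω x => ⟨Measure.le_iff.2 fun A hA => (hB2b ω x A hA).1,
      Measure.le_iff.2 fun A hA => (hB2b ω x A hA).2⟩
  have hMt : ∀ ω x, Adm W ω x → ENNReal.ofReal etm • νt ≤ Mt ω x ∧
      Mt ω x ≤ ENNReal.ofReal etp • νt :=
    fun ω x hx => ⟨Measure.le_iff.2 fun D hD => (hMtbd ω x hx D hD).1,
      Measure.le_iff.2 fun D hD => (hMtbd ω x hx D hD).2⟩
  have hJ {ω x} (hx : Adm W ω x) := Jmass_mem_Icc m₂ (fun j => hWnn ω (x j)) hx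
    ENNReal.ofReal_ne_top ENNReal.ofReal_ne_top (ENNReal.ofReal_pos.2 hetm).ne'
    ENNReal.ofReal_ne_top ENNReal.ofReal_ne_top (fun j => hM ω (x j)) (hMt ω x hx)
  have hΔ : 1 ≤ Δ3 := by simpa [div_self hx'.wavg_pos.ne'] using hWr ω' ω' x' x' hx' hx'
  have hW : Wavg W ω x ≤ Δ3 * Wavg W ω' x' :=
    (div_le_iff₀ hx'.wavg_pos).1 (hWr ω ω' x x' hx hx')
  obtain ⟨-, hJx⟩ := hJ hx
  obtain ⟨hJx', -⟩ := hJ hx'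
  have hconst :=
    Jmass_upper_const_le_mul_lower_const m₂ hx.wavg_pos.le hW hΔ hεm hεmp hetm hetmp
  -- in `ℝ≥0∞`, `J ≤ α * J'` implies `J / J' ≤ α` also when `J'` is `0` or `∞`
  exact ENNReal.div_le_of_le_mul <| hJx.trans <| (mul_le_mul_left hconst _).trans <|
    (mul_assoc _ _ _).trans_le (mul_le_mul_right hJx' _)

/-- **Lemma 2 (J-ratio bound).** Fix `m₁, m₂ ≥ 1`, assume (B2) and a uniform bound
`Δ3` on ratios of average weights. For any member `M̃` of the class `𝕄^{m₁,m₂}`,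
the ratio `J(ω,x)/J(ω',x')` is bounded by
`α = ((Δ3)³·(ε̃₊/ε̃₋)·(ε₊^{m₂}/ε₋^{m₂}))²·(ε̃₊/ε̃₋)`. -/
theorem lemma2_J_ratio
    (M : Env H → E → Measure E) (W : Env H → E → ℝ)
    (hMprob : ∀ ω x, IsProbabilityMeasure (M ω x))
    (hMmeas : Measurable fun p : Env H × E => M p.1 p.2)
    (hWmeas : Measurable fun p : Env H × E => W p.1 p.2)
    (hWnn : ∀ ω x, 0 ≤ W ω x)
    (m₁ m₂ : ℕ) (hm₁ : 1 ≤ m₁) (hm₂ : 1 ≤ m₂)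
    -- (B2), minorisation/majorisation part
    (εm εp : ℝ) (hεm : 0 < εm) (hεmp : εm ≤ εp)
    (ν : Measure E) [IsProbabilityMeasure ν]
    (hB2b : ∀ ω x, ∀ A : Set E, MeasurableSet A →
        ENNReal.ofReal εm * ν A ≤ M ω x A ∧ M ω x A ≤ ENNReal.ofReal εp * ν A)
    -- uniform bound on ratios of average weights over admissible configurations
    (Δ3 : ℝ) (hΔ3 : 0 < Δ3)
    (hWr : ∀ ω ω' : Env H, ∀ x x' : Fin m₁ → E, Adm W ω x → Adm W ω' x' →
        Wavg W ω x / Wavg W ω' x' ≤ Δ3)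
    -- M̃: a member of the class 𝕄^{m₁,m₂}, with its constants and reference measure
    (Mt : Env H → (Fin m₁ → E) → Measure (Fin m₂ → E))
    (hMtmeas : ∀ ω, Measurable (Mt ω))
    (hMtprob : ∀ ω x, IsProbabilityMeasure (Mt ω x))
    (etm etp : ℝ) (hetm : 0 < etm) (hetmp : etm ≤ etp)
    (νt : Measure (Fin m₂ → E)) [IsProbabilityMeasure νt]
    (hMtbd : ∀ ω, ∀ x : Fin m₁ → E, Adm W ω x →
        ∀ D : Set (Fin m₂ → E), MeasurableSet D →
          ENNReal.ofReal etm * νt D ≤ Mt ω x D ∧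
          Mt ω x D ≤ ENNReal.ofReal etp * νt D)
    (hac : (Measure.pi fun _ : Fin m₂ => ν) ≪ νt)
    (hL2 : ∫⁻ x', ((Measure.pi fun _ : Fin m₂ => ν).rnDeriv νt x') ^ 2 ∂νt < ∞) :
    ∀ ω ω' : Env H, ∀ x x' : Fin m₁ → E, Adm W ω x → Adm W ω' x' →
      Jmass M W m₁ m₂ Mt ω x / Jmass M W m₁ m₂ Mt ω' x'
        ≤ ENNReal.ofReal
            ((Δ3 ^ 3 * (etp / etm) * (εp ^ m₂ / εm ^ m₂)) ^ 2 * (etp / etm)) :=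
  lemma2_J_ratio_general M W hWnn m₁ m₂ εm εp hεm hεmp ν hB2b Δ3 hWr Mt etm etp hetm hetmp νt hMtbd
end

section
/- Assume (B2) and let (η,h,λ) be the eigen-triple of Proposition 2, so that Q^ω(h(zω,·))(x) = λ_ω·h(ω,x) for all (ω,x). Then for every ω ∈ Ω, all integers m₁, m₂ ≥ 1 and every admissible x ∈ E^{m₁}: ∫_{E^{m₂}} 𝐐^{m₁,m₂}(ω,x,du)·𝐡^{m₂}(zω,u) = λ_ω·𝐡^{m₁}(ω,x), where 𝐡^m(ω,x) = (1/m)Σ_{j=1}^m h(ω,x^j); that is, the additive average 𝐡 is an eigenfunction of the particle kernel 𝐐 with the same eigenvalue λ_ω. -/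
open MeasureTheory ENNReal Filter Topology

noncomputable section

variable {H E : Type*} [MeasurableSpace H] [MeasurableSpace E]

/-! The particles of `𝐌^{m₁,m₂}(ω,x,·)` are i.i.d. with law `mixK`, so the average `𝐡^{m₂}(zω,·)`
integrates to `mixK(h(zω,·))`. Multiplied by the average weight, `mixK` becomes the plain average
`(1/m₁) Σ_j Q^ω(x^j,·)`, and the eigen-relation `Q^ω(h(zω,·)) = λ_ω h(ω,·)` applies to each
particle separately. -/

theorem ENNReal.ofReal_sum_div_natCast {ι : Type*} (s : Finset ι) {f : ι → ℝ}
    (hf : ∀ i ∈ s, 0 ≤ f i) {n : ℕ} (hn : n ≠ 0) :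
    ENNReal.ofReal ((∑ i ∈ s, f i) / n) = (∑ i ∈ s, ENNReal.ofReal (f i)) / n := by
  rw [ENNReal.ofReal_div_of_pos (by positivity), ENNReal.ofReal_sum_of_nonneg hf,
    ENNReal.ofReal_natCast]

theorem lintegral_average_comp_eval_pi {α : Type*} [MeasurableSpace α] {n : ℕ} (hn : n ≠ 0)
    (μ : Measure α) [IsProbabilityMeasure μ] {g : α → ℝ≥0∞} (hg : Measurable g) :
    ∫⁻ u, (∑ i, g (u i)) / n ∂(Measure.pi fun _ : Fin n => μ) = ∫⁻ y, g y ∂μ := by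
  have hmarginal (i : Fin n) : ∫⁻ u, g (u i) ∂(Measure.pi fun _ : Fin n => μ) = ∫⁻ y, g y ∂μ :=
    (measurePreserving_eval (fun _ : Fin n => μ) i).lintegral_comp hg
  simp_rw [div_eq_mul_inv]
  rw [lintegral_mul_const' _ _ (ENNReal.inv_ne_top.mpr (by exact_mod_cast hn)),
    lintegral_finsetSum _ fun i _ => by fun_prop]
  simp only [hmarginal, Finset.sum_const, Finset.card_univ, Fintype.card_fin, nsmul_eq_mul]
  rw [mul_comm, ← mul_assoc, ENNReal.inv_mul_cancel (by exact_mod_cast hn) (natCast_ne_top n),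
    one_mul]

section Mixture

omit [MeasurableSpace H]

variable {M : Env H → E → Measure E} {W : Env H → E → ℝ} {ω : Env H} {m : ℕ} {x : Fin m → E}

theorem isProbabilityMeasure_mixK (hM : ∀ ω x, IsProbabilityMeasure (M ω x))
    (hW : ∀ ω x, 0 ≤ W ω x) (hx : Adm W ω x) : IsProbabilityMeasure (mixK M W ω x) := by
  constructor
  simp only [mixK, Measure.smul_apply, Measure.coe_finsetSum, Finset.sum_apply, smul_eq_mul,
    measure_univ, mul_one]
  rw [← ENNReal.ofReal_sum_of_nonneg fun j _ => hW ω (x j)]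
  exact ENNReal.inv_mul_cancel (ENNReal.ofReal_pos.mpr hx).ne' ofReal_ne_top

theorem Wavg_smul_mixK (hx : Adm W ω x) :
    ENNReal.ofReal (Wavg W ω x) • mixK M W ω x = (m : ℝ≥0∞)⁻¹ • ∑ j, Qk M W ω (x j) := by
  have hm : m ≠ 0 := by
    rintro rfl
    simp [Adm] at hx
  rw [Wavg, ENNReal.ofReal_div_of_pos (by positivity), ENNReal.ofReal_natCast, mixK, smul_smul,
    div_eq_mul_inv, mul_right_comm,
    ENNReal.mul_inv_cancel (ENNReal.ofReal_pos.mpr hx).ne' ofReal_ne_top, one_mul]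
  rfl

end Mixture

theorem lemma3_particle_eigenfunction_general
    (M : Env H → E → Measure E) (W : Env H → E → ℝ)
    (hMprob : ∀ ω x, IsProbabilityMeasure (M ω x))
    (hWnn : ∀ ω x, 0 ≤ W ω x)
    -- the eigen-triple (η, h, λ) of Proposition 2
    (h : Env H → E → ℝ) (lam : Env H → ℝ)
    (hhpos : ∀ ω x, 0 < h ω x)
    (hhmeas : Measurable (fun p : Env H × E => h p.1 p.2))
    (hlampos : ∀ ω, 0 < lam ω)
    (heig2 : ∀ ω x, ∫⁻ y, ENNReal.ofReal (h (shift ω) y) ∂(Qk M W ω x)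
        = ENNReal.ofReal (lam ω * h ω x)) :
    ∀ ω : Env H, ∀ m₁ m₂ : ℕ, 1 ≤ m₁ → 1 ≤ m₂ → ∀ x : Fin m₁ → E,
      Adm W ω x →
      ∫⁻ u, ENNReal.ofReal (havg h (shift ω) u)
          ∂(ENNReal.ofReal (Wavg W ω x) • Mpart M W m₂ ω x)
        = ENNReal.ofReal (lam ω * havg h ω x) := by
  intro ω m₁ m₂ hm₁ hm₂ x hx
  replace hm₁ := Nat.one_le_iff_ne_zero.mp hm₁
  replace hm₂ := Nat.one_le_iff_ne_zero.mp hm₂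
  have := isProbabilityMeasure_mixK hMprob hWnn hx
  have hh : Measurable fun y => ENNReal.ofReal (h (shift ω) y) :=
    (hhmeas.comp measurable_prodMk_left).ennreal_ofReal
  calc ∫⁻ u, ENNReal.ofReal (havg h (shift ω) u)
          ∂(ENNReal.ofReal (Wavg W ω x) • Mpart M W m₂ ω x)
      = ENNReal.ofReal (Wavg W ω x) * ∫⁻ y, ENNReal.ofReal (h (shift ω) y) ∂(mixK M W ω x) := by
        simp only [lintegral_smul_measure, havg, Mpart, smul_eq_mul,
          ENNReal.ofReal_sum_div_natCast _ (fun i _ => (hhpos _ _).le) hm₂,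
          lintegral_average_comp_eval_pi hm₂ _ hh]
    _ = (∑ j, ENNReal.ofReal (lam ω * h ω (x j))) / m₁ := by
        rw [← smul_eq_mul, ← lintegral_smul_measure, Wavg_smul_mixK hx, lintegral_smul_measure,
          lintegral_finsetSum_measure, smul_eq_mul, ENNReal.div_eq_inv_mul]
        simp only [heig2]
    _ = ENNReal.ofReal (lam ω * havg h ω x) := by
        rw [havg, ← mul_div_assoc, Finset.mul_sum, ENNReal.ofReal_sum_div_natCast _
          (fun j _ => mul_nonneg (hlampos ω).le (hhpos ω (x j)).le) hm₁]

/-- **Lemma 3 (particle eigenfunction).** Assume (B2) and let `(η,h,λ)` be the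
eigen-triple of Proposition 2 (so `Q^ω(h(zω,·))(x) = λ_ω·h(ω,x)`). Then for every
`ω`, all `m₁, m₂ ≥ 1` and every admissible `x ∈ E^{m₁}`,
`∫ 𝐐^{m₁,m₂}(ω,x,du)·𝐡^{m₂}(zω,u) = λ_ω·𝐡^{m₁}(ω,x)`, where
`𝐐^{m₁,m₂}(ω,x,·) = 𝐖^{m₁}(ω,x)·𝐌^{m₁,m₂}(ω,x,·)`. -/
theorem lemma3_particle_eigenfunction
    (M : Env H → E → Measure E) (W : Env H → E → ℝ)
    (hMprob : ∀ ω x, IsProbabilityMeasure (M ω x))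
    (hMmeas : Measurable fun p : Env H × E => M p.1 p.2)
    (hWmeas : Measurable fun p : Env H × E => W p.1 p.2)
    (hWnn : ∀ ω x, 0 ≤ W ω x) (CW : ℝ) (hWbdd : ∀ ω x, W ω x ≤ CW)
    -- (B2)
    (Δ1 : ℝ) (hΔ1 : 0 < Δ1)
    (hB2a : ∀ ω x u, ∫⁻ y, ENNReal.ofReal (W (shift ω) y) ∂(M ω x)
        ≤ ENNReal.ofReal Δ1 * ∫⁻ y, ENNReal.ofReal (W (shift ω) y) ∂(M ω u))
    (εm εp : ℝ) (hεm : 0 < εm) (hεmp : εm ≤ εp)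
    (ν : Measure E) [IsProbabilityMeasure ν]
    (hB2b : ∀ ω x, ∀ A : Set E, MeasurableSet A →
        ENNReal.ofReal εm * ν A ≤ M ω x A ∧ M ω x A ≤ ENNReal.ofReal εp * ν A)
    (Δ2 : ℝ) (hΔ2 : 0 < Δ2)
    (hB2c : ∀ n : ℕ, 1 ≤ n → ∀ ω, ∀ σ₁ σ₂ : Measure E,
        IsProbabilityMeasure σ₁ → IsProbabilityMeasure σ₂ →
        QnMass M W n ω σ₁ ≤ ENNReal.ofReal Δ2 * QnMass M W n ω σ₂)
    (hB2d : ∀ n : ℕ, 1 ≤ n → ∀ ω, ∀ σ : Measure E, IsProbabilityMeasure σ →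
        0 < QnMass M W n ω σ ∧ QnMass M W n ω σ < ∞)
    -- the eigen-triple (η, h, λ) of Proposition 2
    (η : Env H → Measure E) (h : Env H → E → ℝ) (lam : Env H → ℝ)
    (hη : ∀ ω, IsProbabilityMeasure (η ω))
    (hhpos : ∀ ω x, 0 < h ω x)
    (hhmeas : Measurable (fun p : Env H × E => h p.1 p.2))
    (hlammeas : Measurable lam)
    (hlampos : ∀ ω, 0 < lam ω)
    (hlamdef : ∀ ω, lam ω = ∫ x, W ω x ∂(η ω))
    (heig1 : ∀ ω, ∀ A : Set E, MeasurableSet A →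
        ((η ω).bind (Qk M W ω)) A = ENNReal.ofReal (lam ω) * η (shift ω) A)
    (heig2 : ∀ ω x, ∫⁻ y, ENNReal.ofReal (h (shift ω) y) ∂(Qk M W ω x)
        = ENNReal.ofReal (lam ω * h ω x))
    (heig3 : ∀ ω, ∫ x, h ω x ∂(η ω) = 1) :
    ∀ ω : Env H, ∀ m₁ m₂ : ℕ, 1 ≤ m₁ → 1 ≤ m₂ → ∀ x : Fin m₁ → E,
      Adm W ω x →
      ∫⁻ u, ENNReal.ofReal (havg h (shift ω) u)
          ∂(ENNReal.ofReal (Wavg W ω x) • Mpart M W m₂ ω x)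
        = ENNReal.ofReal (lam ω * havg h ω x) :=
  lemma3_particle_eigenfunction_general M W hMprob hWnn h lam hhpos hhmeas hlampos heig2

end
end
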